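/- arXiv:1511.06136 — 3 statements merged into one kernel-verified Lean document; each statement's English description precedes it below -/
import Mathlib

section
/- Let A : (0,1) → (0,∞) be C¹, let V_h : Ω̄ → ℝ² be a C¹ vector field on the closure of Ω = { (x_h, z) : z ∈ (0,1), x_h ∈ ω_h(z) } ⊂ ℝ³ satisfying div_h V_h(x_h, z) = ∂_z A(z)/A(z) for all (x_h, z) ∈ Ω, and for ε > 0 set V_{h,ε}(x_h, z) = ε V_h(x_h/ε, z). Suppose r = r(t, z) and v = v(t, z) are C¹ functions satisfying ∂_t (r A) + ∂_z (r v A) = 0 for all z ∈ (0,1). Then the three-dimensional vector field U_ε(x_h, z) = [V_{h,ε}(x_h, z) v, v] (horizontal components V_{h,ε} v, vertical component v) satisfies the continuity equation ∂_t r + div_x (r U_ε) = 0 in Ω_ε = { (ε x_h, z) : z ∈ (0,1), x_h ∈ ω_h(z) }. -/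
open MeasureTheory Metric Set Filter Matrix Bornology
open scoped Topology NNReal ENNReal

noncomputable section

/-- Coerce a plain function `Fin k -> R` into `EuclideanSpace R (Fin k)`. -/
def toE {k : ℕ} (f : Fin k → ℝ) : EuclideanSpace ℝ (Fin k) := WithLp.toLp 2 f

/-- Real inner product on Euclidean space. -/
def rinner {n : ℕ} (x y : EuclideanSpace ℝ (Fin n)) : ℝ := inner ℝ x y

/-- The gradient matrix `(grad v)_{ij} = d_j v_i` of a vector field on Euclidean space,
defined through the Frechet derivative. -/
def gradM {n : ℕ} (v : EuclideanSpace ℝ (Fin n) → EuclideanSpace ℝ (Fin n))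
    (x : EuclideanSpace ℝ (Fin n)) : Matrix (Fin n) (Fin n) ℝ :=
  fun i j => fderiv ℝ v x (EuclideanSpace.single j 1) i

/-- Squared Frobenius norm of a matrix. -/
def frob2 {n : ℕ} (M : Matrix (Fin n) (Fin n) ℝ) : ℝ := ∑ i, ∑ j, (M i j) ^ 2

/-- Frobenius inner product `M : N`. -/
def frobInner {n : ℕ} (M N : Matrix (Fin n) (Fin n) ℝ) : ℝ := ∑ i, ∑ j, M i j * N i j

/-- Symmetric part of a matrix. -/
def symPart {n : ℕ} (M : Matrix (Fin n) (Fin n) ℝ) : Matrix (Fin n) (Fin n) ℝ :=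
  (1/2 : ℝ) • (M + Mᵀ)

/-- The thin channel `Ω_ε = {(ε x_h, z) : z ∈ (0,1), x_h ∈ ω(z)}`, where the last
coordinate is the vertical variable `z`. -/
def channel {m : ℕ} (ω : ℝ → Set (EuclideanSpace ℝ (Fin (m+1)))) (ε : ℝ) :
    Set (EuclideanSpace ℝ (Fin (m+2))) :=
  {x | x (Fin.last (m+1)) ∈ Set.Ioo (0:ℝ) 1 ∧
    (toE fun i : Fin (m+1) => x (Fin.castSucc i) / ε) ∈ ω (x (Fin.last (m+1)))}

/-- `ν` is an outward unit normal to `Ω` at the boundary point `x`: `ν` has unit norm and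
satisfies the tangent-cone condition at `x`. -/
def isOutwardNormalAt {n : ℕ} (Ω : Set (EuclideanSpace ℝ (Fin n)))
    (x ν : EuclideanSpace ℝ (Fin n)) : Prop :=
  ‖ν‖ = 1 ∧ ∀ δ : ℝ, 0 < δ → ∃ ρ : ℝ, 0 < ρ ∧
    ∀ y ∈ Ω ∩ Metric.ball x ρ, rinner ν (y - x) ≤ δ * ‖y - x‖

/-- The boundary condition `v · n = 0` on `∂Ω` (at every boundary point admitting an
outward unit normal). -/
def normalBC {n : ℕ} (Ω : Set (EuclideanSpace ℝ (Fin n)))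
    (v : EuclideanSpace ℝ (Fin n) → EuclideanSpace ℝ (Fin n)) : Prop :=
  ∀ x ∈ frontier Ω, ∀ ν, isOutwardNormalAt Ω x ν → rinner (v x) ν = 0

/-- The boundary condition `v = 0` on the top and bottom parts `z ∈ {0,1}` of the channel. -/
def endsZero {m : ℕ} (Ω : Set (EuclideanSpace ℝ (Fin (m+2))))
    (v : EuclideanSpace ℝ (Fin (m+2)) → EuclideanSpace ℝ (Fin (m+2))) : Prop :=
  ∀ x ∈ closure Ω, (x (Fin.last (m+1)) = 0 ∨ x (Fin.last (m+1)) = 1) → v x = 0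

/-- Condition (ii): the Lipschitz-graph boundary condition with parameters `γ, M`:
near every boundary point, in some rotated orthonormal coordinate system, `Ω` coincides
with the epigraph of an `M`-Lipschitz function. -/
def lipGraph (k : ℕ) (γ M : ℝ) (Ω : Set (EuclideanSpace ℝ (Fin (k+1)))) : Prop :=
  ∀ x ∈ frontier Ω,
    ∃ g : EuclideanSpace ℝ (Fin (k+1)) ≃ₗᵢ[ℝ] EuclideanSpace ℝ (Fin (k+1)),
    ∃ φ : EuclideanSpace ℝ (Fin k) → ℝ,
      LipschitzWith (Real.toNNReal M) φ ∧
      ∀ y : EuclideanSpace ℝ (Fin (k+1)),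
        (∀ i : Fin k, |g y (Fin.castSucc i) - g x (Fin.castSucc i)| < γ) →
        |g y (Fin.last k) - g x (Fin.last k)| < M * γ * Real.sqrt k →
        (y ∈ Ω ↔ φ (toE fun i => g y (Fin.castSucc i)) < g y (Fin.last k))

/-- The cross sections `{ω(z)}_{z∈[0,1]}` form a uniformly Lipschitz family of simply
connected bounded domains, and the boundary of `Ω₁` is Lipschitz. -/
def goodFamily (m : ℕ) (ω : ℝ → Set (EuclideanSpace ℝ (Fin (m+1)))) : Prop :=
  (∀ z ∈ Set.Icc (0:ℝ) 1, IsOpen (ω z) ∧ IsBounded (ω z) ∧ (ω z).Nonempty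
      ∧ SimplyConnectedSpace (ω z)) ∧
  (∃ γ M : ℝ, 0 < γ ∧ 0 < M ∧ ∀ z ∈ Set.Icc (0:ℝ) 1, lipGraph m γ M (ω z)) ∧
  ∃ γ M : ℝ, 0 < γ ∧ 0 < M ∧ lipGraph (m+1) γ M (channel ω 1)

/-- The point `(x_h/ε, z)` obtained from `x = (x_h, z)` by undoing the horizontal scaling. -/
def unscale (ε : ℝ) (x : EuclideanSpace ℝ (Fin 3)) : EuclideanSpace ℝ (Fin 3) :=
  toE fun j => if j = Fin.last 2 then x j else x j / ε

/-- The tilted extension `U_ε = [V_{h,ε} v, v]`, where `V_{h,ε}(x_h,z) = ε V_h(x_h/ε, z)`. -/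
def Ueps (ε : ℝ) (Vh : EuclideanSpace ℝ (Fin 3) → EuclideanSpace ℝ (Fin 2))
    (v : ℝ → ℝ → ℝ) (t : ℝ) (x : EuclideanSpace ℝ (Fin 3)) : EuclideanSpace ℝ (Fin 3) :=
  toE fun j => if h : j = Fin.last 2 then v t (x (Fin.last 2))
    else ε * Vh (unscale ε x) (j.castPred h) * v t (x (Fin.last 2))

/-!
Since `U_ε = v • (ε V_h(x_h/ε, z), 1)`, the factor `ε` cancels the `ε⁻¹` from the chain rule, so
the horizontal part of `div_x (r U_ε)` at `(x_h, z)` is `r v (div_h V_h)(x_h/ε, z) = r v A'/A`,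
and its vertical part is `∂_z (r v)`. Dividing `∂ₜ(r A) + ∂_z(r v A) = 0` by `A > 0` gives
`∂ₜ r + ∂_z (r v) + r v A'/A = 0`.
-/

theorem HasDerivAt.hasFDerivAt_comp_apply {ι : Type*} [Fintype ι] {g : ℝ → ℝ} {g' : ℝ} (j : ι)
    {x : EuclideanSpace ℝ ι} (hg : HasDerivAt g g' (x j)) :
    HasFDerivAt (fun y : EuclideanSpace ℝ ι => g (y j))
      (g' • (EuclideanSpace.proj j : EuclideanSpace ℝ ι →L[ℝ] ℝ)) x :=
  hg.comp_hasFDerivAt x (EuclideanSpace.proj (𝕜 := ℝ) j).hasFDerivAt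

/-- `∂ₜ(ρ A) + ∂_z(q A) = 0` in non-conservative form. -/
theorem deriv_add_deriv_add_mul_logDeriv_eq_zero {ρ q A : ℝ → ℝ} {t z : ℝ}
    (hρ : DifferentiableAt ℝ ρ t) (hq : DifferentiableAt ℝ q z) (hA : DifferentiableAt ℝ A z)
    (hAz : A z ≠ 0) (h : deriv (fun s => ρ s * A z) t + deriv (fun y => q y * A y) z = 0) :
    deriv ρ t + deriv q z + q z * (deriv A z / A z) = 0 := by
  rw [deriv_mul_const hρ, deriv_fun_mul hq hA] at h
  field_simp
  linarith

def unscaleCLM (ε : ℝ) : EuclideanSpace ℝ (Fin 3) →L[ℝ] EuclideanSpace ℝ (Fin 3) :=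
  LinearMap.toContinuousLinearMap
  { toFun := unscale ε
    map_add' a b := by
      ext k
      simp only [unscale, toE, PiLp.add_apply, PiLp.toLp_apply]
      split_ifs <;> ring
    map_smul' c a := by
      ext k
      simp only [unscale, toE, PiLp.toLp_apply, PiLp.smul_apply, smul_eq_mul, RingHom.id_apply]
      split_ifs <;> ring }

theorem unscaleCLM_apply (ε : ℝ) (y : EuclideanSpace ℝ (Fin 3)) :
    unscaleCLM ε y = unscale ε y := rfl

theorem unscale_last (ε : ℝ) (x : EuclideanSpace ℝ (Fin 3)) :
    unscale ε x (Fin.last 2) = x (Fin.last 2) := by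
  simp only [unscale, toE, PiLp.toLp_apply, ↓reduceIte]

theorem unscale_castSucc (ε : ℝ) (x : EuclideanSpace ℝ (Fin 3)) (i : Fin 2) :
    unscale ε x i.castSucc = x i.castSucc / ε :=
  if_neg i.castSucc_ne_last

theorem unscale_single_castSucc (ε : ℝ) (i : Fin 2) :
    unscale ε (EuclideanSpace.single i.castSucc 1) =
      ε⁻¹ • EuclideanSpace.single i.castSucc 1 := by
  ext k
  by_cases hk : k = Fin.last 2
  · subst hk
    rw [unscale_last, PiLp.smul_apply, PiLp.single_apply, if_neg i.castSucc_ne_last.symm,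
      smul_zero]
  · obtain ⟨j, rfl⟩ := Fin.exists_castSucc_eq.2 hk
    by_cases hji : j = i <;> simp [unscale_castSucc, hji, div_eq_inv_mul]

theorem unscale_mem_channel {ω : ℝ → Set (EuclideanSpace ℝ (Fin 2))} {ε : ℝ}
    {x : EuclideanSpace ℝ (Fin 3)} (hx : x ∈ channel ω ε) : unscale ε x ∈ channel ω 1 := by
  obtain ⟨hz, hω⟩ := hx
  refine ⟨by rwa [unscale_last], ?_⟩
  rw [unscale_last]
  simpa only [unscale_castSucc, div_one] using hω

theorem Ueps_last (ε : ℝ) (Vh : EuclideanSpace ℝ (Fin 3) → EuclideanSpace ℝ (Fin 2))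
    (v : ℝ → ℝ → ℝ) (t : ℝ) (x : EuclideanSpace ℝ (Fin 3)) :
    Ueps ε Vh v t x (Fin.last 2) = v t (x (Fin.last 2)) := by
  simp only [Ueps, toE, PiLp.toLp_apply, ↓reduceDIte]

theorem Ueps_castSucc (ε : ℝ) (Vh : EuclideanSpace ℝ (Fin 3) → EuclideanSpace ℝ (Fin 2))
    (v : ℝ → ℝ → ℝ) (t : ℝ) (x : EuclideanSpace ℝ (Fin 3)) (i : Fin 2) :
    Ueps ε Vh v t x i.castSucc = ε * Vh (unscale ε x) i * v t (x (Fin.last 2)) := by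
  simp only [Ueps, toE, PiLp.toLp_apply, dif_neg i.castSucc_ne_last, Fin.castPred_castSucc]

section TiltedFlux

variable {ε : ℝ} {Vh : EuclideanSpace ℝ (Fin 3) → EuclideanSpace ℝ (Fin 2)} {r v : ℝ → ℝ → ℝ}
  {t : ℝ} {x : EuclideanSpace ℝ (Fin 3)}

theorem fderiv_flux_Ueps_last
    (hrv : DifferentiableAt ℝ (fun s => r t s * v t s) (x (Fin.last 2))) :
    fderiv ℝ (fun y => r t (y (Fin.last 2)) * Ueps ε Vh v t y (Fin.last 2)) x
        (EuclideanSpace.single (Fin.last 2) 1) =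
      deriv (fun s => r t s * v t s) (x (Fin.last 2)) := by
  simp only [Ueps_last]
  rw [(hrv.hasDerivAt.hasFDerivAt_comp_apply _).fderiv]
  simp

theorem fderiv_flux_Ueps_castSucc (hε : ε ≠ 0) (i : Fin 2)
    (hrv : DifferentiableAt ℝ (fun s => r t s * v t s) (x (Fin.last 2)))
    (hV : DifferentiableAt ℝ (fun w => Vh w i) (unscale ε x)) :
    fderiv ℝ (fun y => r t (y (Fin.last 2)) * Ueps ε Vh v t y i.castSucc) x
        (EuclideanSpace.single i.castSucc 1) =
      r t (x (Fin.last 2)) * v t (x (Fin.last 2)) *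
        fderiv ℝ (fun w => Vh w i) (unscale ε x) (EuclideanSpace.single i.castSucc 1) := by
  have hflux : (fun y => r t (y (Fin.last 2)) * Ueps ε Vh v t y i.castSucc) =
      fun y => ε * (r t (y (Fin.last 2)) * v t (y (Fin.last 2)) * Vh (unscaleCLM ε y) i) := by
    funext y
    rw [Ueps_castSucc, unscaleCLM_apply]
    ring
  have hV' : HasFDerivAt (fun y => Vh (unscaleCLM ε y) i)
      ((fderiv ℝ (fun w => Vh w i) (unscale ε x)).comp (unscaleCLM ε)) x :=
    hV.hasFDerivAt.comp x (unscaleCLM ε).hasFDerivAt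
  rw [hflux, (((hrv.hasDerivAt.hasFDerivAt_comp_apply _).fun_mul hV').const_mul ε).fderiv]
  simp only [_root_.add_apply, _root_.smul_apply, ContinuousLinearMap.comp_apply,
    unscaleCLM_apply, unscale_single_castSucc, map_smul, smul_eq_mul, PiLp.proj_apply,
    PiLp.single_eq_of_ne' _ i.castSucc_ne_last, mul_zero, add_zero]
  field_simp

theorem sum_fderiv_flux_Ueps (hε : ε ≠ 0)
    (hrv : DifferentiableAt ℝ (fun s => r t s * v t s) (x (Fin.last 2)))
    (hV : ∀ i, DifferentiableAt ℝ (fun w => Vh w i) (unscale ε x)) :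
    ∑ j : Fin 3, fderiv ℝ (fun y => r t (y (Fin.last 2)) * Ueps ε Vh v t y j) x
        (EuclideanSpace.single j 1) =
      deriv (fun s => r t s * v t s) (x (Fin.last 2)) +
        r t (x (Fin.last 2)) * v t (x (Fin.last 2)) *
          ∑ i : Fin 2, fderiv ℝ (fun w => Vh w i) (unscale ε x)
            (EuclideanSpace.single i.castSucc 1) := by
  rw [Fin.sum_univ_castSucc, Finset.mul_sum, fderiv_flux_Ueps_last hrv, add_comm]
  simp only [fderiv_flux_Ueps_castSucc hε _ hrv (hV _)]

end TiltedFlux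

/-- the tilted extension of a solution of the 1D continuity equation with
cross-sectional area `A` solves the 3D continuity equation on the thin channel. -/
theorem tilted_extension_continuity_equation
    (ω : ℝ → Set (EuclideanSpace ℝ (Fin 2))) (A : ℝ → ℝ) (hA : ContDiff ℝ 1 A)
    (hApos : ∀ z ∈ Set.Ioo (0:ℝ) 1, 0 < A z)
    (Vh : EuclideanSpace ℝ (Fin 3) → EuclideanSpace ℝ (Fin 2)) (hVh : ContDiff ℝ 1 Vh)
    (hdiv : ∀ x ∈ channel ω 1,
      (∑ i : Fin 2, fderiv ℝ (fun y => Vh y i) x (EuclideanSpace.single (Fin.castSucc i) 1))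
        = deriv A (x (Fin.last 2)) / A (x (Fin.last 2)))
    (r v : ℝ → ℝ → ℝ)
    (hr : ContDiff ℝ 1 (Function.uncurry r)) (hv : ContDiff ℝ 1 (Function.uncurry v))
    (hpde : ∀ t : ℝ, ∀ z ∈ Set.Ioo (0:ℝ) 1,
      deriv (fun s => r s z * A z) t + deriv (fun y => r t y * v t y * A y) z = 0)
    (ε : ℝ) (hε : 0 < ε) :
    ∀ t : ℝ, ∀ x ∈ channel ω ε,
      deriv (fun s => r s (x (Fin.last 2))) t +
        (∑ j : Fin 3, fderiv ℝ (fun y => r t (y (Fin.last 2)) * Ueps ε Vh v t y j) x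
          (EuclideanSpace.single j 1)) = 0 := by
  intro t x hx
  have hr' := hr.differentiable one_ne_zero
  have hv' := hv.differentiable one_ne_zero
  have hrv : Differentiable ℝ (fun s => r t s * v t s) := by
    simpa using (by fun_prop : Differentiable ℝ
      (fun s => Function.uncurry r (t, s) * Function.uncurry v (t, s)))
  have hrz : Differentiable ℝ (fun s => r s (x (Fin.last 2))) := by
    simpa using (by fun_prop : Differentiable ℝ (fun s => Function.uncurry r (s, x (Fin.last 2))))
  have hV : ∀ i, Differentiable ℝ (fun w => Vh w i) := fun i =>
    (EuclideanSpace.proj (𝕜 := ℝ) i).differentiable.comp (hVh.differentiable one_ne_zero)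
  have hdivx := hdiv _ (unscale_mem_channel hx)
  rw [unscale_last] at hdivx
  rw [sum_fderiv_flux_Ueps hε.ne' (hrv _) (fun i => hV i _), hdivx, ← add_assoc]
  exact deriv_add_deriv_add_mul_logDeriv_eq_zero (hrz t) (hrv _)
    (hA.differentiable one_ne_zero _) (hApos _ hx.1).ne' (hpde t _ hx.1)
end
end

section
/- Let the pressure p satisfy the assumptions (press) and let H be the pressure potential. Let K, K̃ ⊂ (0,∞) be compact sets with K ⊂ int(K̃). Then there exists a constant C(K, K̃) > 0 such that for all r ∈ K, all ρ ∈ [0,∞) \ K̃, and all u, U ∈ ℝ³: (1/2) ρ |u − U|² + H(ρ) − H'(r)(ρ − r) − H(r) ≥ C(K, K̃) ( 1 + ρ |u − U|² + ρ^γ ). -/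
open MeasureTheory Metric Set Filter Matrix Bornology
open scoped Topology NNReal ENNReal

noncomputable section

/-- The structural assumptions (press) on the pressure: `p ∈ C[0,∞) ∩ C³(0,∞)`,
`p(0) = 0`, `p' > 0` on `(0,∞)`, and `p'(ρ)/ρ^{γ-1} → p_∞ > 0` as `ρ → ∞`. -/
def press (p : ℝ → ℝ) (γ : ℝ) : Prop :=
  ContinuousOn p (Set.Ici 0) ∧ ContDiffOn ℝ 3 p (Set.Ioi 0) ∧ p 0 = 0 ∧
  (∀ ρ : ℝ, 0 < ρ → 0 < deriv p ρ) ∧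
  ∃ pinf : ℝ, 0 < pinf ∧
    Filter.Tendsto (fun ρ : ℝ => deriv p ρ / ρ ^ (γ - 1)) Filter.atTop (nhds pinf)

/-- The pressure potential `H(ρ) = ρ ∫₁^ρ p(z)/z² dz` (equal to `0` at `ρ = 0`). -/
def Hpot (p : ℝ → ℝ) (ρ : ℝ) : ℝ := ρ * ∫ z in (1:ℝ)..ρ, p z / z ^ 2

/-- The relative energy density
`E(ρ,u | r,U) = ½ ρ |u−U|² + H(ρ) − H'(r)(ρ−r) − H(r)`. -/
def relEnergy (p : ℝ → ℝ) (ρ r : ℝ) (u U : EuclideanSpace ℝ (Fin 3)) : ℝ :=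
  2⁻¹ * ρ * ‖u - U‖ ^ 2 + Hpot p ρ - deriv (Hpot p) r * (ρ - r) - Hpot p r

/-!
Apart from the kinetic term, the relative energy is the Bregman divergence
`H ρ - H r - H' r * (ρ - r)` of the strictly convex potential `H`. For fixed `r` it grows as `ρ`
moves away from `r`. Since `ρ ∉ K̃` keeps a distance `δ > 0` from `K`, it is bounded below by its
values at `r ± δ / 2` and at `ρ = 0` (where it equals `p r`); these are positive and continuous
in `r`, hence bounded below by a positive constant on `K`, which handles bounded `ρ`. For large
`ρ`, integrating `p' ρ ≳ ρ ^ (γ - 1)` twice gives `H ρ ≳ ρ ^ γ`, which dominates the terms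
affine in `ρ`.
-/

open intervalIntegral

def bregman (f : ℝ → ℝ) (x y : ℝ) : ℝ := f x - deriv f y * (x - y) - f y

theorem relEnergy_eq_add_bregman (p : ℝ → ℝ) (ρ r : ℝ) (u U : EuclideanSpace ℝ (Fin 3)) :
    relEnergy p ρ r u U = 2⁻¹ * ρ * ‖u - U‖ ^ 2 + bregman (Hpot p) ρ r := by
  unfold relEnergy bregman
  ring

theorem IsCompact.exists_pos_forall_le {X : Type*} [TopologicalSpace X] {K : Set X}
    (hK : IsCompact K) {g : X → ℝ} (hg : ContinuousOn g K) (hpos : ∀ x ∈ K, 0 < g x) :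
    ∃ c > 0, ∀ x ∈ K, c ≤ g x := by
  rcases K.eq_empty_or_nonempty with rfl | hne
  · exact ⟨1, one_pos, by simp⟩
  obtain ⟨x₀, hx₀, hmin⟩ := hK.exists_isMinOn hne hg
  exact ⟨g x₀, hpos x₀ hx₀, fun x hx => hmin hx⟩

theorem IsCompact.exists_pos_le_dist_of_subset_interior {X : Type*} [PseudoMetricSpace X]
    {K T : Set X} (hK : IsCompact K) (hKT : K ⊆ interior T) :
    ∃ δ > 0, ∀ x ∈ K, ∀ y ∉ T, δ ≤ dist y x := by
  obtain ⟨δ, hδ, hthick⟩ := hK.exists_thickening_subset_open isOpen_interior hKT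
  refine ⟨δ, hδ, fun x hx y hy => ?_⟩
  by_contra! h
  exact hy (interior_subset (hthick (mem_thickening_iff.2 ⟨x, hx, h⟩)))

theorem eventually_mul_add_le_mul_rpow {γ c : ℝ} (hγ : 1 < γ) (hc : 0 < c) (A B : ℝ) :
    ∀ᶠ x in atTop, A * x + B ≤ c * x ^ γ := by
  have hlarge : ∀ᶠ x in atTop, |A| + |B| ≤ c * x ^ (γ - 1) :=
    ((tendsto_rpow_atTop (sub_pos.2 hγ)).const_mul_atTop hc).eventually_ge_atTop _
  filter_upwards [hlarge, eventually_ge_atTop 1] with x hx hx1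
  have hsplit : x ^ γ = x ^ (γ - 1) * x := by
    rw [← Real.rpow_add_one (by positivity), sub_add_cancel]
  calc A * x + B ≤ |A| * x + |B| * x := by
        gcongr
        · exact le_abs_self A
        · exact (le_abs_self B).trans (le_mul_of_one_le_right (abs_nonneg B) hx1)
    _ = (|A| + |B|) * x := by ring
    _ ≤ c * x ^ (γ - 1) * x := by gcongr
    _ = c * x ^ γ := by rw [hsplit, mul_assoc]

theorem le_of_hasDerivAt_ge_rpow {f f' : ℝ → ℝ} {a β c D : ℝ} (ha : 0 < a) (hβ : 0 < β)
    (hf : ∀ x, a ≤ x → HasDerivAt f (f' x) x)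
    (hf' : ∀ x, a ≤ x → c * x ^ (β - 1) - D ≤ f' x) {x : ℝ} (hx : a ≤ x) :
    c / β * x ^ β - D * x - (c / β * a ^ β - D * a - f a) ≤ f x := by
  set g : ℝ → ℝ := fun y => c / β * y ^ β - D * y
  have hdiff : ∀ y, a ≤ y →
      HasDerivAt (fun y => f y - g y) (f' y - (c * y ^ (β - 1) - D)) y := by
    intro y hy
    have hg := ((Real.hasDerivAt_rpow_const (p := β) (Or.inl (ha.trans_le hy).ne')).const_mul
      (c / β)).sub ((hasDerivAt_id y).const_mul D)
    refine (hf y hy).sub (hg.congr_deriv ?_)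
    field_simp
  have hmono : MonotoneOn (fun y => f y - g y) (Ici a) := by
    refine monotoneOn_of_deriv_nonneg (convex_Ici a)
      (fun y hy => (hdiff y hy).continuousAt.continuousWithinAt) ?_ ?_ <;> rw [interior_Ici]
    · exact fun y hy => (hdiff y hy.le).differentiableAt.differentiableWithinAt
    · intro y hy
      rw [(hdiff y hy.le).deriv, sub_nonneg]
      exact hf' y hy.le
  have := hmono self_mem_Ici hx hx
  simp only [g] at this
  linarith

section Bregman

variable {f : ℝ → ℝ} {a r : ℝ}

@[simp]
theorem bregman_self (f : ℝ → ℝ) (r : ℝ) : bregman f r r = 0 := by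
  simp [bregman]

theorem hasDerivAt_bregman {x : ℝ} (hf : DifferentiableAt ℝ f x) :
    HasDerivAt (fun y => bregman f y r) (deriv f x - deriv f r) x := by
  simpa [bregman] using
    (hf.hasDerivAt.sub (((hasDerivAt_id x).sub_const r).const_mul (deriv f r))).sub_const (f r)

theorem bregman_strictMonoOn (hf : DifferentiableOn ℝ f (Ioi a))
    (hf' : StrictMonoOn (deriv f) (Ioi a)) (hr : a < r) :
    StrictMonoOn (fun x => bregman f x r) (Ici r) := by
  have hd : ∀ x, r ≤ x → HasDerivAt (fun y => bregman f y r) (deriv f x - deriv f r) x :=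
    fun x hx => hasDerivAt_bregman
      ((hf x (hr.trans_le hx)).differentiableAt (isOpen_Ioi.mem_nhds (hr.trans_le hx)))
  refine strictMonoOn_of_deriv_pos (convex_Ici r)
    (fun x hx => (hd x hx).continuousAt.continuousWithinAt) ?_
  rw [interior_Ici]
  intro x hx
  rw [(hd x hx.le).deriv, sub_pos]
  exact hf' hr (hr.trans hx) hx

theorem bregman_strictAntiOn (hf : DifferentiableOn ℝ f (Ioi a))
    (hf' : StrictMonoOn (deriv f) (Ioi a)) :
    StrictAntiOn (fun x => bregman f x r) (Ioc a r) := by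
  have hd : ∀ x, a < x → HasDerivAt (fun y => bregman f y r) (deriv f x - deriv f r) x :=
    fun x hx => hasDerivAt_bregman ((hf x hx).differentiableAt (isOpen_Ioi.mem_nhds hx))
  refine strictAntiOn_of_deriv_neg (convex_Ioc a r)
    (fun x hx => (hd x hx.1).continuousAt.continuousWithinAt) ?_
  rw [interior_Ioc]
  intro x hx
  rw [(hd x hx.1).deriv, sub_neg]
  exact hf' hx.1 (hx.1.trans hx.2) hx.2

theorem bregman_pos (hf : DifferentiableOn ℝ f (Ioi a)) (hf' : StrictMonoOn (deriv f) (Ioi a))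
    {x : ℝ} (hx : a < x) (hr : a < r) (hxr : x ≠ r) : 0 < bregman f x r := by
  rcases hxr.lt_or_gt with hlt | hgt
  · simpa using bregman_strictAntiOn hf hf' ⟨hx, hlt.le⟩ ⟨hr, le_rfl⟩ hlt
  · simpa using bregman_strictMonoOn hf hf' hr self_mem_Ici hgt.le hgt

theorem min_bregman_le (hf : DifferentiableOn ℝ f (Ioi a)) (hf' : StrictMonoOn (deriv f) (Ioi a))
    {x δ : ℝ} (hδ₀ : 0 ≤ δ) (hrδ : a < r - δ) (hx : a < x) (hδ : δ ≤ |x - r|) :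
    min (bregman f (r - δ) r) (bregman f (r + δ) r) ≤ bregman f x r := by
  rcases le_total x r with hxr | hrx
  · have hle : x ≤ r - δ := by
      rw [abs_of_nonpos (sub_nonpos.2 hxr)] at hδ
      linarith
    exact (min_le_left _ _).trans <| (bregman_strictAntiOn hf hf').antitoneOn
      ⟨hx, hxr⟩ ⟨hrδ, by linarith⟩ hle
  · have hle : r + δ ≤ x := by
      rw [abs_of_nonneg (sub_nonneg.2 hrx)] at hδ
      linarith
    exact (min_le_right _ _).trans <|
      (bregman_strictMonoOn hf hf' (by linarith)).monotoneOn
      (mem_Ici.2 (by linarith)) (mem_Ici.2 hrx) hle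

theorem continuousOn_bregman_comp {K : Set ℝ} {u : ℝ → ℝ} (hf : ContinuousOn f (Ioi a))
    (hf' : ContinuousOn (deriv f) (Ioi a)) (hK : K ⊆ Ioi a) (hu : Continuous u)
    (huK : MapsTo u K (Ioi a)) : ContinuousOn (fun r => bregman f (u r) r) K := by
  unfold bregman
  exact ((hf.comp hu.continuousOn huK).sub
    ((hf'.mono hK).mul (hu.continuousOn.sub continuousOn_id))).sub (hf.mono hK)

theorem exists_bregman_ge_sub {K : Set ℝ} (hK : IsCompact K) (hf : ContinuousOn f K)
    (hf' : ContinuousOn (deriv f) K) :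
    ∃ A B : ℝ, ∀ r ∈ K, ∀ x, 0 ≤ x → f x - (A * x + B) ≤ bregman f x r := by
  obtain ⟨A, hA⟩ := hK.exists_bound_of_continuousOn hf'
  obtain ⟨B, hB⟩ := hK.exists_bound_of_continuousOn hf
  obtain ⟨R, hR⟩ := hK.exists_bound_of_continuousOn continuousOn_id
  refine ⟨A, A * R + B, fun r hr x hx => ?_⟩
  have hA0 : 0 ≤ A := (norm_nonneg _).trans (hA r hr)
  have hlin : deriv f r * (x - r) ≤ A * (x + R) := calc
    deriv f r * (x - r) ≤ |deriv f r| * |x - r| := by rw [← abs_mul]; exact le_abs_self _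
    _ ≤ A * (x + R) := by
      gcongr
      · exact hA r hr
      · exact (abs_sub _ _).trans (by rw [abs_of_nonneg hx]; gcongr; exact hR r hr)
  have hfr : f r ≤ B := (le_abs_self _).trans (hB r hr)
  unfold bregman
  linarith

theorem exists_pos_le_bregman {K T : Set ℝ} (hf : DifferentiableOn ℝ f (Ioi 0))
    (hfc' : ContinuousOn (deriv f) (Ioi 0)) (hf' : StrictMonoOn (deriv f) (Ioi 0))
    (hf₀ : ContinuousOn (fun r => bregman f 0 r) K) (hpos₀ : ∀ r ∈ K, 0 < bregman f 0 r)
    (hK : IsCompact K) (hK0 : K ⊆ Ioi 0) (hKT : K ⊆ interior T) :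
    ∃ c > 0, ∀ r ∈ K, ∀ x ∈ Ici 0 \ T, c ≤ bregman f x r := by
  obtain ⟨δ, hδ, hsep⟩ := hK.exists_pos_le_dist_of_subset_interior (T := T ∩ Ioi 0)
    (by rw [interior_inter, isOpen_Ioi.interior_eq]; exact subset_inter hKT hK0)
  -- the gap `δ` also separates `K` from `0`, so `r - δ / 2` stays positive on `K`
  have hδr : ∀ r ∈ K, δ / 2 < r := fun r hr => by
    have := hsep r hr 0 (by simp)
    rw [Real.dist_eq, zero_sub, abs_neg, abs_of_pos (hK0 hr)] at this
    linarith
  have hcont := hf.continuousOn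
  obtain ⟨c, hc, hcm⟩ := hK.exists_pos_forall_le (g := fun r =>
      min (min (bregman f (r - δ / 2) r) (bregman f (r + δ / 2) r)) (bregman f 0 r))
    (((continuousOn_bregman_comp hcont hfc' hK0 (continuous_sub_right _)
      (fun r hr => by simp; linarith [hδr r hr])).inf
      (continuousOn_bregman_comp hcont hfc' hK0 (continuous_add_const _)
      (fun r hr => by simp; linarith [mem_Ioi.1 (hK0 hr)]))).inf hf₀)
    (fun r hr => by
      have hr0 : 0 < r := hK0 hr
      refine lt_min (lt_min ?_ ?_) (hpos₀ r hr) <;> refine bregman_pos hf hf' ?_ hr0 ?_ <;>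
        linarith [hδr r hr])
  refine ⟨c, hc, fun r hr x ⟨hx0, hxT⟩ => (hcm r hr).trans ?_⟩
  rcases (mem_Ici.1 hx0).eq_or_lt with rfl | hx
  · exact min_le_right _ _
  · refine (min_le_left _ _).trans
      (min_bregman_le hf hf' (by positivity) (by linarith [hδr r hr]) hx ?_)
    have := hsep r hr x (fun h => hxT h.1)
    rw [Real.dist_eq] at this
    linarith

end Bregman

section PressurePotential

variable {p : ℝ → ℝ} {x : ℝ}

theorem pos_of_deriv_pos (hpc : ContinuousOn p (Ici 0)) (hp0 : p 0 = 0)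
    (hp' : ∀ x, 0 < x → 0 < deriv p x) (hx : 0 < x) : 0 < p x := by
  have hmono : StrictMonoOn p (Ici 0) :=
    strictMonoOn_of_deriv_pos (convex_Ici 0) hpc (by rw [interior_Ici]; exact hp')
  simpa [hp0] using hmono self_mem_Ici hx.le hx

theorem hasDerivAt_integral_div_sq (hp : ContinuousOn p (Ioi 0)) (hx : 0 < x) :
    HasDerivAt (fun y => ∫ z in (1 : ℝ)..y, p z / z ^ 2) (p x / x ^ 2) x := by
  have hcont : ContinuousOn (fun z => p z / z ^ 2) (Ioi 0) :=
    hp.div (continuousOn_pow 2) fun z hz => pow_ne_zero 2 (ne_of_gt hz)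
  refine integral_hasDerivAt_right ?_ (hcont.stronglyMeasurableAtFilter isOpen_Ioi x hx)
    (hcont.continuousAt (isOpen_Ioi.mem_nhds hx))
  exact (hcont.mono fun z hz => lt_of_lt_of_le (lt_min one_pos hx) hz.1).intervalIntegrable

theorem hasDerivAt_Hpot (hp : ContinuousOn p (Ioi 0)) (hx : 0 < x) :
    HasDerivAt (Hpot p) ((∫ z in (1 : ℝ)..x, p z / z ^ 2) + p x / x) x := by
  have h : HasDerivAt (fun y => y * ∫ z in (1 : ℝ)..y, p z / z ^ 2)
      (1 * (∫ z in (1 : ℝ)..x, p z / z ^ 2) + x * (p x / x ^ 2)) x :=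
    (hasDerivAt_id' x).mul (hasDerivAt_integral_div_sq hp hx)
  exact h.congr_deriv (by field_simp)

theorem hasDerivAt_deriv_Hpot (hp : DifferentiableOn ℝ p (Ioi 0)) (hx : 0 < x) :
    HasDerivAt (deriv (Hpot p)) (deriv p x / x) x := by
  have heq : deriv (Hpot p) =ᶠ[𝓝 x] fun y => (∫ z in (1 : ℝ)..y, p z / z ^ 2) + p y / y :=
    eventually_of_mem (isOpen_Ioi.mem_nhds hx) fun y hy =>
      (hasDerivAt_Hpot hp.continuousOn hy).deriv
  have hpx := (hp x hx).differentiableAt (isOpen_Ioi.mem_nhds hx)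
  refine (((hasDerivAt_integral_div_sq hp.continuousOn hx).add
    (hpx.hasDerivAt.div (hasDerivAt_id' x) hx.ne')).congr_deriv ?_).congr_of_eventuallyEq heq
  field_simp
  ring

theorem strictMonoOn_deriv_Hpot (hp : DifferentiableOn ℝ p (Ioi 0))
    (hp' : ∀ x, 0 < x → 0 < deriv p x) : StrictMonoOn (deriv (Hpot p)) (Ioi 0) := by
  refine strictMonoOn_of_deriv_pos (convex_Ioi 0)
    (fun x hx => (hasDerivAt_deriv_Hpot hp hx).continuousAt.continuousWithinAt) ?_
  rw [interior_Ioi]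
  intro x hx
  rw [(hasDerivAt_deriv_Hpot hp hx).deriv]
  exact div_pos (hp' x hx) hx

theorem bregman_Hpot_zero (hp : ContinuousOn p (Ioi 0)) {r : ℝ} (hr : 0 < r) :
    bregman (Hpot p) 0 r = p r := by
  simp only [bregman, Hpot, (hasDerivAt_Hpot hp hr).deriv]
  field_simp
  ring

theorem exists_eventually_rpow_le_Hpot {γ pinf : ℝ} (hp : DifferentiableOn ℝ p (Ioi 0))
    (hγ : 1 < γ) (hpinf : 0 < pinf)
    (hlim : Tendsto (fun ρ => deriv p ρ / ρ ^ (γ - 1)) atTop (𝓝 pinf)) :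
    ∃ c > 0, ∃ A B : ℝ, ∀ᶠ ρ in atTop, c * ρ ^ γ - (A * ρ + B) ≤ Hpot p ρ := by
  obtain ⟨R, hR⟩ :=
    eventually_atTop.1 (hlim.eventually (eventually_ge_nhds (half_lt_self hpinf)))
  set a := max R 1
  have ha : 0 < a := lt_of_lt_of_le one_pos (le_max_right _ _)
  have hp'_ge : ∀ y, a ≤ y → pinf / 2 * y ^ (γ - 1 - 1) - 0 ≤ deriv p y / y := by
    intro y hy
    have hy0 : 0 < y := ha.trans_le hy
    have := hR y ((le_max_left _ _).trans hy)
    rw [le_div_iff₀ (by positivity)] at this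
    rw [sub_zero, Real.rpow_sub_one hy0.ne', ← mul_div_assoc]
    gcongr
  set k := pinf / 2 / (γ - 1)
  set D := k * a ^ (γ - 1) - deriv (Hpot p) a
  have hH'_ge : ∀ y, a ≤ y → k * y ^ (γ - 1) - D ≤ deriv (Hpot p) y :=
    fun y hy => by
      simpa using le_of_hasDerivAt_ge_rpow ha (sub_pos.2 hγ)
        (fun z hz => hasDerivAt_deriv_Hpot hp (ha.trans_le hz)) hp'_ge hy
  refine ⟨k / γ, by have := sub_pos.2 hγ; positivity, D, k / γ * a ^ γ - D * a - Hpot p a,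
    (eventually_ge_atTop a).mono fun ρ hρ => ?_⟩
  refine le_of_eq_of_le ?_ (le_of_hasDerivAt_ge_rpow (β := γ) ha (by linarith) (fun z hz =>
    (hasDerivAt_Hpot hp.continuousOn (ha.trans_le hz)).differentiableAt.hasDerivAt)
    hH'_ge hρ)
  ring

theorem exists_eventually_mul_le_bregman_Hpot {γ pinf : ℝ} (hp : DifferentiableOn ℝ p (Ioi 0))
    (hγ : 1 < γ) (hpinf : 0 < pinf)
    (hlim : Tendsto (fun ρ => deriv p ρ / ρ ^ (γ - 1)) atTop (𝓝 pinf))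
    {K : Set ℝ} (hK : IsCompact K) (hK0 : K ⊆ Ioi 0) :
    ∃ c > 0, ∀ᶠ ρ in atTop, ∀ r ∈ K, c * (1 + ρ ^ γ) ≤ bregman (Hpot p) ρ r := by
  obtain ⟨c, hc, A, B, hgrowth⟩ := exists_eventually_rpow_le_Hpot hp hγ hpinf hlim
  obtain ⟨A', B', hbregman⟩ := exists_bregman_ge_sub hK
    (fun r hr => (hasDerivAt_Hpot hp.continuousOn (hK0 hr)).continuousAt.continuousWithinAt)
    (fun r hr => (hasDerivAt_deriv_Hpot hp (hK0 hr)).continuousAt.continuousWithinAt)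
  refine ⟨c / 2, by positivity, ?_⟩
  filter_upwards [hgrowth, eventually_ge_atTop 0,
    eventually_mul_add_le_mul_rpow hγ (half_pos hc) (A + A') (B + B' + c / 2)]
    with ρ hHpot hρ hdominate r hr
  linarith [hbregman r hr ρ hρ]

end PressurePotential

theorem exists_mul_le_bregman_Hpot {p : ℝ → ℝ} {γ : ℝ} (hp : press p γ) (hγ : 1 < γ)
    {K T : Set ℝ} (hK : IsCompact K) (hK0 : K ⊆ Ioi 0) (hKT : K ⊆ interior T) :
    ∃ C > 0, ∀ r ∈ K, ∀ ρ ∈ Ici 0 \ T, C * (1 + ρ ^ γ) ≤ bregman (Hpot p) ρ r := by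
  obtain ⟨hpc, hpd, hp0, hp', pinf, hpinf, hlim⟩ := hp
  have hpd : DifferentiableOn ℝ p (Ioi 0) := hpd.differentiableOn (by norm_num)
  obtain ⟨c₀, hc₀, hnear⟩ := exists_pos_le_bregman
    (fun x hx => (hasDerivAt_Hpot hpd.continuousOn hx).differentiableAt.differentiableWithinAt)
    (fun x hx => (hasDerivAt_deriv_Hpot hpd hx).continuousAt.continuousWithinAt)
    (strictMonoOn_deriv_Hpot hpd hp')
    ((hpc.mono (hK0.trans Ioi_subset_Ici_self)).congr
      fun r hr => bregman_Hpot_zero hpd.continuousOn (hK0 hr))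
    (fun r hr => (bregman_Hpot_zero hpd.continuousOn (hK0 hr)).symm ▸
      pos_of_deriv_pos hpc hp0 hp' (hK0 hr))
    hK hK0 hKT
  obtain ⟨c₁, hc₁, hfar⟩ := exists_eventually_mul_le_bregman_Hpot hpd hγ hpinf hlim hK hK0
  obtain ⟨R, hR0, hR⟩ := (atTop_basis' 0).eventually_iff.1 hfar
  have hR' : 0 < 1 + R ^ γ := by positivity
  refine ⟨min c₁ (c₀ / (1 + R ^ γ)), by positivity, fun r hr ρ hρ => ?_⟩
  have hρ0 : 0 ≤ ρ := hρ.1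
  rcases le_or_gt R ρ with hRρ | hρR
  · calc min c₁ (c₀ / (1 + R ^ γ)) * (1 + ρ ^ γ) ≤ c₁ * (1 + ρ ^ γ) := by
          gcongr
          exact min_le_left _ _
      _ ≤ bregman (Hpot p) ρ r := hR hRρ r hr
  · calc min c₁ (c₀ / (1 + R ^ γ)) * (1 + ρ ^ γ) ≤ c₀ / (1 + R ^ γ) * (1 + R ^ γ) := by
          gcongr
          exact min_le_right _ _
      _ = c₀ := div_mul_cancel₀ _ hR'.ne'
      _ ≤ bregman (Hpot p) ρ r := hnear r hr ρ hρ

theorem relative_energy_coercivity_residual_general (p : ℝ → ℝ) (γ : ℝ)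
    (hp : press p γ) (hγ : 3/2 < γ)
    (K Kt : Set ℝ) (hK : IsCompact K)
    (hK0 : K ⊆ Set.Ioi 0) (hKsub : K ⊆ interior Kt) :
    ∃ C : ℝ, 0 < C ∧
      ∀ r ∈ K, ∀ ρ ∈ Set.Ici (0:ℝ) \ Kt, ∀ u U : EuclideanSpace ℝ (Fin 3),
        C * (1 + ρ * ‖u - U‖ ^ 2 + ρ ^ γ) ≤ relEnergy p ρ r u U := by
  obtain ⟨C, hC, hbound⟩ := exists_mul_le_bregman_Hpot hp (by linarith) hK hK0 hKsub
  refine ⟨min C 2⁻¹, lt_min hC (by norm_num), fun r hr ρ hρ u U => ?_⟩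
  have hρ0 : 0 ≤ ρ := hρ.1
  rw [relEnergy_eq_add_bregman]
  calc min C 2⁻¹ * (1 + ρ * ‖u - U‖ ^ 2 + ρ ^ γ)
      = min C 2⁻¹ * (1 + ρ ^ γ) + min C 2⁻¹ * (ρ * ‖u - U‖ ^ 2) := by ring
    _ ≤ C * (1 + ρ ^ γ) + 2⁻¹ * (ρ * ‖u - U‖ ^ 2) := by
        gcongr
        · exact min_le_left _ _
        · exact min_le_right _ _
    _ ≤ 2⁻¹ * ρ * ‖u - U‖ ^ 2 + bregman (Hpot p) ρ r := by
        rw [mul_assoc]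
        linarith [hbound r hr ρ hρ]

/-- coercivity of the relative energy density in the residual regime
`ρ ∈ [0,∞) \ K̃`, `r ∈ K ⊂ int K̃`. -/
theorem relative_energy_coercivity_residual (p : ℝ → ℝ) (γ : ℝ)
    (hp : press p γ) (hγ : 3/2 < γ)
    (K Kt : Set ℝ) (hK : IsCompact K) (hKt : IsCompact Kt)
    (hK0 : K ⊆ Set.Ioi 0) (hKt0 : Kt ⊆ Set.Ioi 0) (hKsub : K ⊆ interior Kt) :
    ∃ C : ℝ, 0 < C ∧
      ∀ r ∈ K, ∀ ρ ∈ Set.Ici (0:ℝ) \ Kt, ∀ u U : EuclideanSpace ℝ (Fin 3),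
        C * (1 + ρ * ‖u - U‖ ^ 2 + ρ ^ γ) ≤ relEnergy p ρ r u U :=
  relative_energy_coercivity_residual_general p γ hp hγ K Kt hK hK0 hKsub
end
end

section
/- Let Ω_ε ⊂ ℝ^n be the thin channel with circular cross sections ω_h(z) = B(X(z), r(z)), where X : [0,1] → ℝ^{n−1} and r : [0,1] → (0,∞) are Lipschitz. Let Q ∈ W^{1,2}((0,1); so(n−1)) be a nonzero function with Q(0) = Q(1) = 0 and define v^ε(x_h, z) = ( Q(z)(x_h − ε X(z)), 0 ) for (x_h, z) ∈ Ω_ε. Then v^ε ∈ W^{1,2}(Ω_ε; ℝ^n), v^ε satisfies the boundary conditions (BC), and there exist constants c > 0 and C, independent of ε, such that ⨍_{Ω_ε} |∇v^ε|² dx ≥ c and ⨍_{Ω_ε} |sym ∇v^ε|² dx ≤ C ε². -/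
/-!
Write `z` for the last coordinate and `w = x_h - ε X(z)`, so that `v = (Q(z) w, 0)` and
`|w| < ε r(z)` on `Ω_ε`. Wherever `X` is differentiable at `z` (almost everywhere, by
Rademacher), `∇v` has the block form `[[Q(z), ∂_z v_h], [0, 0]]` with
`∂_z v_h = Q'(z) w - ε Q(z) X'(z) = O(ε)`. As `Q(z)` is skew, `sym ∇v` only sees this last
column, so `|sym ∇v|² = O(ε²)`, while `|∇v|² ≥ |Q(z)|²`. To bound the average of `|Q(z)|²`
from below uniformly in `ε`, pick `z₀` with `Q(z₀) ≠ 0`: `Ω_ε` contains a cylinder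
`(z₀ - η, z₀ + η) × B(ε X(z₀), ε r(z₀) / 2)` on which `|Q(z)|² ≥ |Q(z₀)|² / 2`, and lies in
`(0, 1) × B(ε X(z₀), ε R)`; the volumes of both scale like `ε^(n-1)`.

On the lateral boundary `|w| = ε r(z)` and `Q(z) w ⊥ w`, so the curves
`x + t (± Q(z) w, 0) + t² (c w, 0)` enter `Ω_ε` for small `t > 0`. An outward normal `ν`
therefore satisfies `⟪ν, (± Q(z) w, 0)⟫ ≤ 0`, i.e. `v · ν = 0`.
-/

open MeasureTheory Metric Set Filter Matrix Bornology
open scoped Topology NNReal ENNReal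

noncomputable section

/-- Membership in the class `𝓘` of `W^{1,2}` paths of skew-symmetric matrices
vanishing at the endpoints (here realized as `C¹` paths). -/
def memI (d : ℕ) (Q : ℝ → Matrix (Fin (d+1)) (Fin (d+1)) ℝ) : Prop :=
  (∀ i j, ContDiff ℝ 1 (fun z => Q z i j)) ∧ (∀ z, (Q z)ᵀ = -(Q z)) ∧ Q 0 = 0 ∧ Q 1 = 0

/-- The rotational test field `v_Q^ε(x_h, z) = (Q(z)(x_h − εX(z)), 0)`. -/
def vQfield (d : ℕ) (X : ℝ → EuclideanSpace ℝ (Fin (d+1))) (ε : ℝ)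
    (Q : ℝ → Matrix (Fin (d+1)) (Fin (d+1)) ℝ)
    (x : EuclideanSpace ℝ (Fin (d+2))) : EuclideanSpace ℝ (Fin (d+2)) :=
  toE fun j => if h : j = Fin.last (d+1) then 0
    else ∑ k : Fin (d+1), Q (x (Fin.last (d+1))) (j.castPred h) k *
      (x (Fin.castSucc k) - ε * X (x (Fin.last (d+1))) k)


section Lipschitz

variable {α : Type*} [PseudoMetricSpace α] {s : Set α}

theorem LipschitzOnWith.mul_of_abs_le {f g : α → ℝ} {Kf Kg A B : ℝ≥0}
    (hf : LipschitzOnWith Kf f s) (hg : LipschitzOnWith Kg g s)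
    (hfA : ∀ x ∈ s, |f x| ≤ A) (hgB : ∀ x ∈ s, |g x| ≤ B) :
    LipschitzOnWith (A * Kg + B * Kf) (fun x => f x * g x) s := by
  refine LipschitzOnWith.of_dist_le_mul fun x hx y hy => ?_
  have hfxy := hf.dist_le_mul x hx y hy
  have hgxy := hg.dist_le_mul x hx y hy
  rw [Real.dist_eq] at hfxy hgxy ⊢
  calc |f x * g x - f y * g y| = |f x * (g x - g y) + g y * (f x - f y)| := by ring_nf
    _ ≤ |f x| * |g x - g y| + |g y| * |f x - f y| := by
        rw [← abs_mul, ← abs_mul]; exact abs_add_le _ _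
    _ ≤ A * (Kg * dist x y) + B * (Kf * dist x y) := by
        gcongr
        exacts [hfA x hx, hgB y hy]
    _ = _ := by push_cast; ring

theorem LipschitzOnWith.finset_sum {ι E : Type*} [SeminormedAddCommGroup E] (t : Finset ι)
    {f : ι → α → E} {K : ι → ℝ≥0} (h : ∀ i ∈ t, LipschitzOnWith (K i) (f i) s) :
    LipschitzOnWith (∑ i ∈ t, K i) (fun x => ∑ i ∈ t, f i x) s := by
  classical
  induction t using Finset.induction_on with
  | empty => simpa using (LipschitzWith.const (α := α) (0 : E)).lipschitzOnWith (s := s)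
  | insert i t hi ih =>
    simp only [Finset.sum_insert hi]
    exact (h i (Finset.mem_insert_self i t)).add
      (ih fun j hj => h j (Finset.mem_insert_of_mem hj))

theorem EuclideanSpace.exists_lipschitzOnWith_of_apply {ι : Type*} [Fintype ι]
    {F : α → EuclideanSpace ℝ ι} (h : ∀ i, ∃ K, LipschitzOnWith K (fun x => F x i) s) :
    ∃ K, LipschitzOnWith K F s := by
  choose K hK using h
  exact ⟨_, (PiLp.lipschitzWith_toLp 2 fun _ : ι => ℝ).comp_lipschitzOnWith
    (g := fun x => (F x).ofLp) fun _ hx _ hy => edist_pi_le_iff.2 fun i =>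
      ((hK i).weaken (Finset.single_le_sum (f := K) (fun _ _ => zero_le)
        (Finset.mem_univ i))) hx hy⟩

theorem EuclideanSpace.lipschitzWith_apply {ι : Type*} [Fintype ι] (i : ι) :
    LipschitzWith 1 fun x : EuclideanSpace ℝ ι => x i :=
  LipschitzWith.of_dist_le_mul fun x y => by simpa using PiLp.dist_apply_le x y i

end Lipschitz

section Average

variable {α : Type*} [MeasurableSpace α] {μ : Measure α} {f : α → ℝ}

theorem setAverage_le_of_ae_le {s : Set α} {C : ℝ} (hC : 0 ≤ C)
    (h : ∀ᵐ x ∂μ.restrict s, f x ≤ C) : ⨍ x in s, f x ∂μ ≤ C := by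
  rw [setAverage_eq, smul_eq_mul]
  by_cases hf : IntegrableOn f s μ
  · by_cases hs : μ s = ∞
    · simp [measureReal_def, hs, hC]
    have hint : ∫ x in s, f x ∂μ ≤ μ.real s * C := by
      simpa [setIntegral_const, smul_eq_mul] using
        integral_mono_ae hf (integrableOn_const hs) h
    rcases (measureReal_nonneg (μ := μ) (s := s)).eq_or_lt with h0 | hpos
    · simp [← h0, hC]
    · rwa [inv_mul_le_iff₀ hpos]
  · simp [integral_undef hf, hC]

theorem mul_measureReal_div_le_setAverage {P s P' : Set α} {m : ℝ} (hm : 0 ≤ m)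
    (hPs : P ⊆ s) (hsP' : s ⊆ P') (hP' : μ P' ≠ ∞) (hf : IntegrableOn f s μ)
    (hf0 : 0 ≤ᵐ[μ.restrict s] f) (hmf : ∀ᵐ x ∂μ.restrict P, m ≤ f x) :
    m * μ.real P / μ.real P' ≤ ⨍ x in s, f x ∂μ := by
  have hs : μ s ≠ ∞ := ne_top_of_le_ne_top hP' (measure_mono hsP')
  have hP : μ P ≠ ∞ := ne_top_of_le_ne_top hs (measure_mono hPs)
  have hint : m * μ.real P ≤ ∫ x in s, f x ∂μ :=
    calc m * μ.real P = ∫ _ in P, m ∂μ := by rw [setIntegral_const, smul_eq_mul, mul_comm]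
      _ ≤ ∫ x in P, f x ∂μ := integral_mono_ae (integrableOn_const hP) (hf.mono_set hPs) hmf
      _ ≤ ∫ x in s, f x ∂μ := setIntegral_mono_set hf hf0 (Eventually.of_forall hPs)
  rw [setAverage_eq, smul_eq_mul]
  rcases (measureReal_nonneg (μ := μ) (s := s)).eq_or_lt with h0 | hpos
  · have : μ.real P = 0 := le_antisymm (h0 ▸ measureReal_mono hPs hs) measureReal_nonneg
    simp [this, ← h0]
  · calc m * μ.real P / μ.real P' ≤ m * μ.real P / μ.real s :=
          div_le_div_of_nonneg_left (by positivity) hpos (measureReal_mono hsP' hP')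
      _ ≤ (μ.real s)⁻¹ * ∫ x in s, f x ∂μ := by
          rw [div_eq_inv_mul]; gcongr

end Average

section Normal

theorem isOutwardNormalAt.rinner_nonpos {n : ℕ} {Ω : Set (EuclideanSpace ℝ (Fin n))}
    {x ν U W : EuclideanSpace ℝ (Fin n)} (hν : isOutwardNormalAt Ω x ν)
    (hcurve : ∀ᶠ t in 𝓝[>] (0:ℝ), x + t • U + t ^ 2 • W ∈ Ω) :
    rinner ν U ≤ 0 := by
  have hW : ∀ t : ℝ, 0 ≤ t → -(t * ‖W‖) ≤ t * inner ℝ ν W := fun t ht => by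
    have := abs_real_inner_le_norm ν W
    rw [hν.1, one_mul] at this
    nlinarith [(abs_le.1 this).1]
  have key : ∀ δ > 0, rinner ν U ≤ δ * ‖U‖ := by
    intro δ hδ
    obtain ⟨ρ, hρ, hρΩ⟩ := hν.2 δ hδ
    have hnear : ∀ᶠ t in 𝓝[>] (0:ℝ), x + t • U + t ^ 2 • W ∈ ball x ρ :=
      ((by fun_prop : Continuous fun t : ℝ => x + t • U + t ^ 2 • W).tendsto' 0 x
        (by simp)).mono_left nhdsWithin_le_nhds (ball_mem_nhds x hρ)
    refine ge_of_tendsto (x := 𝓝[>] (0:ℝ)) (((by fun_prop : Continuous fun t : ℝ =>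
      δ * (‖U‖ + t * ‖W‖) + t * ‖W‖).tendsto' 0 _ (by simp)).mono_left nhdsWithin_le_nhds) ?_
    filter_upwards [hcurve, hnear, self_mem_nhdsWithin] with t hΩ hball (ht : 0 < t)
    have h := hρΩ _ ⟨hΩ, hball⟩
    have hsub : x + t • U + t ^ 2 • W - x = t • (U + t • W) := by module
    have hnorm : ‖U + t • W‖ ≤ ‖U‖ + t * ‖W‖ := by
      simpa [norm_smul, abs_of_pos ht] using norm_add_le U (t • W)
    rw [hsub, norm_smul, Real.norm_of_nonneg ht.le] at h
    simp only [rinner, inner_smul_right, inner_add_right] at h ⊢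
    have h' : inner ℝ ν U + t * inner ℝ ν W ≤ δ * ‖U + t • W‖ :=
      le_of_mul_le_mul_left (by linarith) ht
    nlinarith [hW t ht.le, mul_le_mul_of_nonneg_left hnorm hδ.le]
  exact ge_of_tendsto (x := 𝓝[>] (0:ℝ))
    (((continuous_mul_const ‖U‖).tendsto' 0 0 (zero_mul _)).mono_left nhdsWithin_le_nhds)
    (eventually_nhdsWithin_of_forall key)

theorem exists_eventually_norm_add_smul_lt {E : Type*} [NormedAddCommGroup E]
    [InnerProductSpace ℝ E] {w u : E} (hw : w ≠ 0) (hwu : inner ℝ w u = 0) :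
    ∃ c : ℝ, ∀ᶠ t in 𝓝[>] (0:ℝ), ‖w + t • u + t ^ 2 • (c • w)‖ < ‖w‖ := by
  have hw2 : 0 < ‖w‖ ^ 2 := by positivity
  set c := -(‖u‖ ^ 2 + ‖w‖ ^ 2) / (2 * ‖w‖ ^ 2)
  refine ⟨c, ?_⟩
  have hsmall : ∀ᶠ t in 𝓝[>] (0:ℝ), c ^ 2 * t ^ 2 < 1 :=
    ((by fun_prop : Continuous fun t : ℝ => c ^ 2 * t ^ 2).tendsto' 0 0
      (by simp)).mono_left nhdsWithin_le_nhds |>.eventually (gt_mem_nhds zero_lt_one)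
  filter_upwards [hsmall, self_mem_nhdsWithin] with t hct (ht : 0 < t)
  have hexp : ‖w + t • u + t ^ 2 • (c • w)‖ ^ 2
      = ‖w‖ ^ 2 - t ^ 2 * ‖w‖ ^ 2 * (1 - c ^ 2 * t ^ 2) := by
    have : w + t • u + t ^ 2 • (c • w) = (1 + c * t ^ 2) • w + t • u := by module
    rw [this, norm_add_sq_real, inner_smul_left, inner_smul_right, hwu, norm_smul, norm_smul,
      mul_pow, mul_pow, Real.norm_eq_abs, Real.norm_eq_abs, sq_abs, sq_abs]
    have hc : c * (2 * ‖w‖ ^ 2) = -(‖u‖ ^ 2 + ‖w‖ ^ 2) := div_mul_cancel₀ _ (by positivity)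
    linear_combination t ^ 2 * hc
  refine lt_of_pow_lt_pow_left₀ 2 (norm_nonneg w) ?_
  rw [hexp]
  have : 0 < t ^ 2 * ‖w‖ ^ 2 * (1 - c ^ 2 * t ^ 2) := by
    have : 0 < 1 - c ^ 2 * t ^ 2 := by linarith
    positivity
  linarith

theorem inner_toEuclideanLin_self_eq_zero {ι : Type*} [Fintype ι] [DecidableEq ι]
    {M : Matrix ι ι ℝ} (hM : Mᵀ = -M) (w : EuclideanSpace ℝ ι) :
    inner ℝ w (toEuclideanLin M w) = 0 := by
  have h : w.ofLp ⬝ᵥ (M *ᵥ w.ofLp) = -(w.ofLp ⬝ᵥ (M *ᵥ w.ofLp)) := by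
    conv_lhs => rw [dotProduct_mulVec, ← mulVec_transpose, hM]
    rw [Matrix.neg_mulVec, neg_dotProduct, dotProduct_comm]
  rw [EuclideanSpace.inner_eq_star_dotProduct, toLpLin_apply, star_trivial, WithLp.ofLp_toLp,
    dotProduct_comm]
  linarith

end Normal

section Gradient

variable {n : ℕ}

theorem gradM_apply_of_hasFDerivAt {v : EuclideanSpace ℝ (Fin n) → EuclideanSpace ℝ (Fin n)}
    {x : EuclideanSpace ℝ (Fin n)} {i : Fin n} {D : EuclideanSpace ℝ (Fin n) →L[ℝ] ℝ}
    (hv : DifferentiableAt ℝ v x) (hD : HasFDerivAt (fun y => v y i) D x) (j : Fin n) :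
    gradM v x i j = D (EuclideanSpace.single j 1) := by
  have h : HasFDerivAt (fun y => v y i) (PiLp.proj 2 (fun _ => ℝ) i ∘L fderiv ℝ v x) x :=
    (PiLp.hasFDerivAt_apply (𝕜 := ℝ) 2 (E := fun _ : Fin n => ℝ) (v x) i).comp x hv.hasFDerivAt
  rw [← h.unique hD]
  rfl

theorem measurable_gradM_apply (v : EuclideanSpace ℝ (Fin n) → EuclideanSpace ℝ (Fin n))
    (i j : Fin n) : Measurable fun x => gradM v x i j :=
  (PiLp.continuous_apply 2 _ i).measurable.comp (measurable_fderiv_apply_const ℝ v _)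

theorem symPart_apply (M : Matrix (Fin n) (Fin n) ℝ) (i j : Fin n) :
    symPart M i j = (M i j + M j i) / 2 := by
  simp only [symPart, Matrix.smul_apply, Matrix.add_apply, transpose_apply, smul_eq_mul]
  ring

theorem Measurable.frob2 {α : Type*} [MeasurableSpace α] {M : α → Matrix (Fin n) (Fin n) ℝ}
    (hM : ∀ i j, Measurable fun x => M x i j) : Measurable fun x => frob2 (M x) :=
  Finset.measurable_sum _ fun i _ => Finset.measurable_sum _ fun j _ => (hM i j).pow_const 2

theorem Continuous.frob2 {α : Type*} [TopologicalSpace α] {M : α → Matrix (Fin n) (Fin n) ℝ}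
    (hM : ∀ i j, Continuous fun x => M x i j) : Continuous fun x => frob2 (M x) :=
  continuous_finsetSum _ fun i _ => continuous_finsetSum _ fun j _ => (hM i j).pow 2

theorem frob2_nonneg (M : Matrix (Fin n) (Fin n) ℝ) : 0 ≤ frob2 M :=
  Finset.sum_nonneg fun _ _ => Finset.sum_nonneg fun _ _ => sq_nonneg _

theorem frob2_pos {M : Matrix (Fin n) (Fin n) ℝ} (hM : M ≠ 0) : 0 < frob2 M := by
  obtain ⟨i, j, hij⟩ : ∃ i j, M i j ≠ 0 := by
    by_contra! h
    exact hM (Matrix.ext h)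
  exact lt_of_lt_of_le (pow_two_pos_of_ne_zero hij) (le_trans
    (Finset.single_le_sum (f := fun j => M i j ^ 2) (fun _ _ => sq_nonneg _) (Finset.mem_univ j))
    (Finset.single_le_sum (f := fun i => ∑ j, M i j ^ 2)
      (fun _ _ => Finset.sum_nonneg fun _ _ => sq_nonneg _) (Finset.mem_univ i)))

end Gradient

section Block

variable {d : ℕ} {M : Matrix (Fin (d+2)) (Fin (d+2)) ℝ} {A : Matrix (Fin (d+1)) (Fin (d+1)) ℝ}
  {b : Fin (d+1) → ℝ}

theorem frob2_eq_of_block (hA : ∀ i j, M i.castSucc j.castSucc = A i j)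
    (hb : ∀ i, M i.castSucc (Fin.last (d+1)) = b i) (hlast : ∀ j, M (Fin.last (d+1)) j = 0) :
    frob2 M = frob2 A + ∑ i, b i ^ 2 := by
  simp only [frob2, Fin.sum_univ_castSucc (n := d+1), hA, hb, hlast]
  simp [Finset.sum_add_distrib]

theorem frob2_symPart_eq_of_block (hskew : Aᵀ = -A) (hA : ∀ i j, M i.castSucc j.castSucc = A i j)
    (hb : ∀ i, M i.castSucc (Fin.last (d+1)) = b i) (hlast : ∀ j, M (Fin.last (d+1)) j = 0) :
    frob2 (symPart M) = 2⁻¹ * ∑ i, b i ^ 2 := by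
  have hA' : ∀ i j, (A i j + A j i) / 2 = 0 := fun i j => by
    have := congrFun (congrFun hskew i) j
    simp only [transpose_apply, Matrix.neg_apply] at this
    linarith
  simp only [frob2, symPart_apply, Fin.sum_univ_castSucc (n := d+1), hA, hA', hb, hlast]
  simp only [add_zero, zero_div, ne_eq, OfNat.ofNat_ne_zero, not_false_eq_true, zero_pow,
    Finset.sum_const_zero, zero_add]
  rw [← Finset.sum_add_distrib, Finset.mul_sum]
  exact Finset.sum_congr rfl fun i _ => by ring

end Block

section Coordinates

variable {d : ℕ}

def horiz : EuclideanSpace ℝ (Fin (d+2)) →L[ℝ] EuclideanSpace ℝ (Fin (d+1)) :=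
  LinearMap.toContinuousLinearMap
    { toFun := fun x => toE fun i => x i.castSucc
      map_add' := fun _ _ => rfl
      map_smul' := fun _ _ => rfl }

@[simp] theorem horiz_apply (x : EuclideanSpace ℝ (Fin (d+2))) (i : Fin (d+1)) :
    horiz x i = x i.castSucc := rfl

def hlift : EuclideanSpace ℝ (Fin (d+1)) →L[ℝ] EuclideanSpace ℝ (Fin (d+2)) :=
  LinearMap.toContinuousLinearMap
    { toFun := fun u => toE (Fin.snoc (fun i => u i) 0)
      map_add' := fun u v => by
        ext j; induction j using Fin.lastCases <;> simp [toE]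
      map_smul' := fun c u => by
        ext j; induction j using Fin.lastCases <;> simp [toE] }

@[simp] theorem hlift_apply_castSucc (u : EuclideanSpace ℝ (Fin (d+1))) (i : Fin (d+1)) :
    hlift u i.castSucc = u i := by
  simp [hlift, toE]

@[simp] theorem hlift_apply_last (u : EuclideanSpace ℝ (Fin (d+1))) :
    hlift u (Fin.last (d+1)) = 0 := by
  simp [hlift, toE]

@[simp] theorem horiz_hlift (u : EuclideanSpace ℝ (Fin (d+1))) : horiz (hlift u) = u := by
  ext i; simp

def splitLast : EuclideanSpace ℝ (Fin (d+2)) ≃ᵐ ℝ × EuclideanSpace ℝ (Fin (d+1)) :=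
  (MeasurableEquiv.toLp 2 (Fin (d+2) → ℝ)).symm.trans
    ((MeasurableEquiv.piFinSuccAbove (fun _ => ℝ) (Fin.last (d+1))).trans
      (MeasurableEquiv.prodCongr (MeasurableEquiv.refl ℝ) (MeasurableEquiv.toLp 2 _)))

@[simp] theorem splitLast_apply (x : EuclideanSpace ℝ (Fin (d+2))) :
    splitLast x = (x (Fin.last (d+1)), horiz x) := by
  ext i
  · rfl
  · simp [splitLast, MeasurableEquiv.piFinSuccAbove, MeasurableEquiv.prodCongr, Fin.init]

theorem measurePreserving_splitLast :
    MeasurePreserving (splitLast (d := d)) volume (volume.prod volume) :=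
  (EuclideanSpace.volume_preserving_symm_measurableEquiv_toLp _).trans
    ((volume_preserving_piFinSuccAbove (fun _ => ℝ) (Fin.last (d+1))).trans
      ((MeasurePreserving.id volume).prod
        (EuclideanSpace.volume_preserving_symm_measurableEquiv_toLp _).symm))

end Coordinates

section Channel

variable {d : ℕ} {X : ℝ → EuclideanSpace ℝ (Fin (d+1))} {r : ℝ → ℝ} {ε : ℝ}

theorem mem_channel_ball_iff (hε : 0 < ε) {x : EuclideanSpace ℝ (Fin (d+2))} :
    x ∈ channel (fun z => ball (X z) (r z)) ε ↔ x (Fin.last (d+1)) ∈ Ioo 0 1 ∧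
      ‖horiz x - ε • X (x (Fin.last (d+1)))‖ < ε * r (x (Fin.last (d+1))) := by
  have h : (toE fun i => x i.castSucc / ε) - X (x (Fin.last (d+1)))
      = ε⁻¹ • (horiz x - ε • X (x (Fin.last (d+1)))) := by
    ext i
    simp [toE, hε.ne', div_eq_inv_mul, mul_sub]
  rw [channel, mem_ofPred_eq, mem_ball, dist_eq_norm, h, norm_smul, Real.norm_of_nonneg
    (inv_nonneg.2 hε.le), inv_mul_lt_iff₀ hε]

theorem abs_sub_le_of_mem_channel_ball {R : ℝ} (hR : ∀ z ∈ Icc (0:ℝ) 1, r z ≤ R) (hε : 0 < ε)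
    {x : EuclideanSpace ℝ (Fin (d+2))} (hx : x ∈ channel (fun z => ball (X z) (r z)) ε)
    (k : Fin (d+1)) : |x k.castSucc - ε * X (x (Fin.last (d+1))) k| ≤ ε * R := by
  obtain ⟨hz, hw⟩ := (mem_channel_ball_iff hε).1 hx
  calc |x k.castSucc - ε * X (x (Fin.last (d+1))) k|
      ≤ ‖horiz x - ε • X (x (Fin.last (d+1)))‖ := by
        simpa using PiLp.norm_apply_le (horiz x - ε • X (x (Fin.last (d+1)))) k
    _ ≤ ε * R := hw.le.trans (mul_le_mul_of_nonneg_left (hR _ (Ioo_subset_Icc_self hz)) hε.le)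

theorem continuous_apply_last : Continuous fun x : EuclideanSpace ℝ (Fin (d+2)) =>
    x (Fin.last (d+1)) :=
  PiLp.continuous_apply 2 _ _

theorem isOpen_channel_ball (hX : Continuous X) (hr : Continuous r) (hε : 0 < ε) :
    IsOpen (channel (fun z => ball (X z) (r z)) ε) := by
  have h : channel (fun z => ball (X z) (r z)) ε =
      {x | 0 < x (Fin.last (d+1))} ∩ {x | x (Fin.last (d+1)) < 1} ∩
        {x | ‖horiz x - ε • X (x (Fin.last (d+1)))‖ < ε * r (x (Fin.last (d+1)))} := by
    ext x
    simp [mem_channel_ball_iff hε, and_assoc]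
  rw [h]
  have hz := continuous_apply_last (d := d)
  exact ((isOpen_lt continuous_const hz).inter (isOpen_lt hz continuous_const)).inter
    (isOpen_lt (by fun_prop) (by fun_prop))

theorem closure_channel_ball_subset (hX : Continuous X) (hr : Continuous r) (hε : 0 < ε) :
    closure (channel (fun z => ball (X z) (r z)) ε) ⊆ {x | x (Fin.last (d+1)) ∈ Icc 0 1 ∧
      ‖horiz x - ε • X (x (Fin.last (d+1)))‖ ≤ ε * r (x (Fin.last (d+1)))} := by
  refine closure_minimal (fun x hx => ?_) ?_
  · obtain ⟨hz, hw⟩ := (mem_channel_ball_iff hε).1 hx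
    exact ⟨Ioo_subset_Icc_self hz, hw.le⟩
  · have hz := continuous_apply_last (d := d)
    simp only [mem_Icc, ofPred_and]
    exact ((isClosed_le continuous_const hz).inter (isClosed_le hz continuous_const)).inter
      (isClosed_le (by fun_prop) (by fun_prop))

end Channel

section Field

variable {d : ℕ} {X : ℝ → EuclideanSpace ℝ (Fin (d+1))} {r : ℝ → ℝ} {ε : ℝ}
  {Q : ℝ → Matrix (Fin (d+1)) (Fin (d+1)) ℝ}

@[simp] theorem vQfield_apply_last (x : EuclideanSpace ℝ (Fin (d+2))) :
    vQfield d X ε Q x (Fin.last (d+1)) = 0 := by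
  simp [vQfield, toE]

@[simp] theorem vQfield_apply_castSucc (x : EuclideanSpace ℝ (Fin (d+2))) (i : Fin (d+1)) :
    vQfield d X ε Q x i.castSucc = ∑ k, Q (x (Fin.last (d+1))) i k *
      (x k.castSucc - ε * X (x (Fin.last (d+1))) k) := by
  simp [vQfield, toE, (Fin.castSucc_lt_last i).ne]

theorem vQfield_eq (x : EuclideanSpace ℝ (Fin (d+2))) :
    vQfield d X ε Q x =
      hlift (toEuclideanLin (Q (x (Fin.last (d+1)))) (horiz x - ε • X (x (Fin.last (d+1))))) := by
  ext j
  induction j using Fin.lastCases <;> simp [toLpLin_apply, mulVec, dotProduct]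

theorem vQfield_eq_zero {x : EuclideanSpace ℝ (Fin (d+2))} (hQ : Q (x (Fin.last (d+1))) = 0) :
    vQfield d X ε Q x = 0 := by
  simp [vQfield_eq, hQ]

theorem endsZero_vQfield (hQ0 : Q 0 = 0) (hQ1 : Q 1 = 0) (Ω : Set (EuclideanSpace ℝ (Fin (d+2)))) :
    endsZero Ω (vQfield d X ε Q) := by
  rintro x - (hz | hz) <;> exact vQfield_eq_zero (by rw [hz]; assumption)

theorem normalBC_vQfield (hX : Continuous X) (hr : Continuous r)
    (hrpos : ∀ z ∈ Icc (0:ℝ) 1, 0 < r z) (hε : 0 < ε) (hskew : ∀ z, (Q z)ᵀ = -(Q z))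
    (hQ0 : Q 0 = 0) (hQ1 : Q 1 = 0) :
    normalBC (channel (fun z => ball (X z) (r z)) ε) (vQfield d X ε Q) := by
  intro x hx ν hν
  set z := x (Fin.last (d+1))
  rw [(isOpen_channel_ball hX hr hε).frontier_eq] at hx
  obtain ⟨hz, hw_le⟩ := closure_channel_ball_subset hX hr hε hx.1
  rcases eq_or_lt_of_le hz.1 with hz0 | hz0
  · rw [vQfield_eq_zero (hz0 ▸ hQ0)]; exact inner_zero_left ν
  rcases eq_or_lt_of_le hz.2 with hz1 | hz1
  · rw [vQfield_eq_zero (hz1 ▸ hQ1)]; exact inner_zero_left ν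
  set w := horiz x - ε • X z
  have hw : ‖w‖ = ε * r z :=
    le_antisymm hw_le (not_lt.1 fun h => hx.2 ((mem_channel_ball_iff hε).2 ⟨⟨hz0, hz1⟩, h⟩))
  have hw0 : w ≠ 0 := norm_pos_iff.1 (hw ▸ mul_pos hε (hrpos z hz))
  have htangent : ∀ u, inner ℝ w u = 0 → rinner ν (hlift u) ≤ 0 := by
    intro u hu
    obtain ⟨c, hc⟩ := exists_eventually_norm_add_smul_lt hw0 hu
    refine hν.rinner_nonpos (W := hlift (c • w)) ?_
    filter_upwards [hc, self_mem_nhdsWithin] with t ht (htpos : 0 < t)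
    refine (mem_channel_ball_iff hε).2 ⟨by simpa using And.intro hz0 hz1, ?_⟩
    simpa [z, w, ← hw, add_sub_right_comm] using ht
  have hQw := inner_toEuclideanLin_self_eq_zero (hskew z) w
  have h1 := htangent _ hQw
  have h2 := htangent (-toEuclideanLin (Q z) w) (by rw [inner_neg_right, hQw, neg_zero])
  rw [map_neg] at h2
  simp only [rinner, inner_neg_right] at h1 h2
  rw [vQfield_eq, rinner, real_inner_comm]
  linarith

end Field

section Bounds

theorem ContDiff.eventually_abs_le_Icc {f : ℝ → ℝ} (hf : ContDiff ℝ 1 f) (a b : ℝ) :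
    ∀ᶠ C in atTop, ∀ z ∈ Icc a b, |f z| ≤ C ∧ |deriv f z| ≤ C := by
  obtain ⟨C₁, h₁⟩ := isCompact_Icc.exists_bound_of_continuousOn hf.continuous.continuousOn
  obtain ⟨C₂, h₂⟩ := isCompact_Icc.exists_bound_of_continuousOn
    (hf.continuous_deriv le_rfl).continuousOn
  filter_upwards [eventually_ge_atTop (max C₁ C₂)] with C hC z hz
  exact ⟨(h₁ z hz).trans (le_of_max_le_left hC), (h₂ z hz).trans (le_of_max_le_right hC)⟩

theorem exists_abs_le_of_contDiff_Icc {ι : Type*} [Finite ι] {f : ι → ℝ → ℝ}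
    (hf : ∀ i, ContDiff ℝ 1 (f i)) (a b : ℝ) :
    ∃ C, ∀ i, ∀ z ∈ Icc a b, |f i z| ≤ C ∧ |deriv (f i) z| ≤ C :=
  (eventually_all.2 fun i => (hf i).eventually_abs_le_Icc a b).exists

theorem lipschitzOnWith_Icc_of_abs_deriv_le {f : ℝ → ℝ} (hf : Differentiable ℝ f) {a b C : ℝ}
    (hC : ∀ z ∈ Icc a b, |deriv f z| ≤ C) : LipschitzOnWith C.toNNReal f (Icc a b) :=
  Convex.lipschitzOnWith_of_nnnorm_deriv_le (fun z _ => hf z)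
    (fun z hz => by
      rw [← NNReal.coe_le_coe, coe_nnnorm]
      exact (hC z hz).trans (Real.le_coe_toNNReal C))
    (convex_Icc a b)

end Bounds

section FieldLipschitz

variable {d : ℕ} {X : ℝ → EuclideanSpace ℝ (Fin (d+1))} {r : ℝ → ℝ} {ε : ℝ}
  {Q : ℝ → Matrix (Fin (d+1)) (Fin (d+1)) ℝ}

theorem exists_lipschitzOnWith_vQfield {KX : ℝ≥0} (hX : LipschitzWith KX X) (hr : Continuous r)
    (hQ : ∀ i j, ContDiff ℝ 1 fun z => Q z i j) (hε : 0 < ε) :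
    ∃ K, LipschitzOnWith K (vQfield d X ε Q) (channel (fun z => ball (X z) (r z)) ε) := by
  set Ω := channel (fun z => ball (X z) (r z)) ε
  obtain ⟨C, hC⟩ := exists_abs_le_of_contDiff_Icc
    (f := fun (p : Fin (d+1) × Fin (d+1)) z => Q z p.1 p.2) (fun p => hQ p.1 p.2) 0 1
  obtain ⟨R, hR⟩ := (isCompact_Icc (a := (0:ℝ)) (b := 1)).bddAbove_image hr.continuousOn
  have hzΩ : ∀ x ∈ Ω, x (Fin.last (d+1)) ∈ Icc (0:ℝ) 1 := fun x hx =>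
    Ioo_subset_Icc_self ((mem_channel_ball_iff hε).1 hx).1
  have hlast := EuclideanSpace.lipschitzWith_apply (ι := Fin (d+2)) (Fin.last (d+1))
  have hQlip : ∀ i k, LipschitzOnWith (C.toNNReal * 1) (fun x => Q (x (Fin.last (d+1))) i k) Ω :=
    fun i k => (lipschitzOnWith_Icc_of_abs_deriv_le ((hQ i k).differentiable one_ne_zero)
      fun z hz => (hC (i, k) z hz).2).comp
      hlast.lipschitzOnWith hzΩ
  have hwlip : ∀ k : Fin (d+1), LipschitzOnWith _
      (fun x => x k.castSucc - ε * X (x (Fin.last (d+1))) k) Ω := fun k =>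
    ((EuclideanSpace.lipschitzWith_apply _).sub ((lipschitzWith_smul ε).comp
      ((EuclideanSpace.lipschitzWith_apply k).comp (hX.comp hlast)))).lipschitzOnWith
  have hwb : ∀ k : Fin (d+1), ∀ x ∈ Ω, |x k.castSucc - ε * X (x (Fin.last (d+1))) k| ≤
      (ε * R).toNNReal := fun k x hx =>
    (abs_sub_le_of_mem_channel_ball (fun z hz => hR (mem_image_of_mem r hz)) hε hx k).trans
      (Real.le_coe_toNNReal _)
  refine EuclideanSpace.exists_lipschitzOnWith_of_apply fun j => ?_
  induction j using Fin.lastCases with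
  | last => exact ⟨0, by simp [LipschitzOnWith]⟩
  | cast i =>
    simp only [vQfield_apply_castSucc]
    exact ⟨_, LipschitzOnWith.finset_sum _ fun k _ => (hQlip i k).mul_of_abs_le (hwlip k)
      (fun x hx => (hC (i, k) _ (hzΩ x hx)).1.trans (Real.le_coe_toNNReal C)) (hwb k)⟩

end FieldLipschitz

section Derivative

variable {d : ℕ} {X : ℝ → EuclideanSpace ℝ (Fin (d+1))} {ε : ℝ}
  {Q : ℝ → Matrix (Fin (d+1)) (Fin (d+1)) ℝ}

def vQfieldDerivLast (d : ℕ) (X : ℝ → EuclideanSpace ℝ (Fin (d+1))) (ε : ℝ)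
    (Q : ℝ → Matrix (Fin (d+1)) (Fin (d+1)) ℝ) (x : EuclideanSpace ℝ (Fin (d+2)))
    (i : Fin (d+1)) : ℝ :=
  ∑ k, (deriv (fun t => Q t i k) (x (Fin.last (d+1))) *
      (x k.castSucc - ε * X (x (Fin.last (d+1))) k) -
    ε * Q (x (Fin.last (d+1))) i k * deriv (fun t => X t k) (x (Fin.last (d+1))))

theorem hasFDerivAt_vQfield_apply_castSucc {x : EuclideanSpace ℝ (Fin (d+2))}
    (hQ : ∀ i j, DifferentiableAt ℝ (fun t => Q t i j) (x (Fin.last (d+1))))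
    (hX : DifferentiableAt ℝ X (x (Fin.last (d+1)))) (i : Fin (d+1)) :
    HasFDerivAt (fun y => vQfield d X ε Q y i.castSucc)
      (∑ k, (Q (x (Fin.last (d+1))) i k • (EuclideanSpace.proj (𝕜 := ℝ) k.castSucc -
          ε • deriv (fun t => X t k) (x (Fin.last (d+1))) •
            EuclideanSpace.proj (𝕜 := ℝ) (Fin.last (d+1))) +
        (x k.castSucc - ε * X (x (Fin.last (d+1))) k) •
          deriv (fun t => Q t i k) (x (Fin.last (d+1))) •
            EuclideanSpace.proj (𝕜 := ℝ) (Fin.last (d+1))))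
      x := by
  have hlast := PiLp.hasFDerivAt_apply (𝕜 := ℝ) 2 (E := fun _ : Fin (d+2) => ℝ) x (Fin.last (d+1))
  simp only [vQfield_apply_castSucc]
  refine HasFDerivAt.fun_sum fun k _ => HasFDerivAt.mul ?_ ?_
  · exact (hQ i k).hasDerivAt.comp_hasFDerivAt x hlast
  · refine (PiLp.hasFDerivAt_apply 2 x k.castSucc).sub (HasFDerivAt.const_mul ?_ ε)
    exact ((differentiableAt_piLp 2).1 hX k).hasDerivAt.comp_hasFDerivAt x hlast

theorem gradM_vQfield {x : EuclideanSpace ℝ (Fin (d+2))}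
    (hQ : ∀ i j, DifferentiableAt ℝ (fun t => Q t i j) (x (Fin.last (d+1))))
    (hX : DifferentiableAt ℝ X (x (Fin.last (d+1)))) :
    (∀ i j, gradM (vQfield d X ε Q) x i.castSucc j.castSucc = Q (x (Fin.last (d+1))) i j) ∧
    (∀ i, gradM (vQfield d X ε Q) x i.castSucc (Fin.last (d+1)) = vQfieldDerivLast d X ε Q x i) ∧
    (∀ j, gradM (vQfield d X ε Q) x (Fin.last (d+1)) j = 0) := by
  have hD := hasFDerivAt_vQfield_apply_castSucc (ε := ε) hQ hX
  have hv : DifferentiableAt ℝ (vQfield d X ε Q) x := (differentiableAt_piLp 2).2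
    (Fin.lastCases (by simp) fun i => (hD i).differentiableAt)
  refine ⟨fun i j => ?_, fun i => ?_, fun j => ?_⟩
  · simp [gradM_apply_of_hasFDerivAt hv (hD i), (Fin.castSucc_lt_last _).ne']
  · rw [gradM_apply_of_hasFDerivAt hv (hD i), vQfieldDerivLast, _root_.sum_apply]
    refine Finset.sum_congr rfl fun k _ => ?_
    simp only [_root_.add_apply, _root_.smul_apply,
      _root_.sub_apply, PiLp.proj_apply, PiLp.single_eq_same, ne_eq,
      Fin.castSucc_ne_last, not_false_eq_true, PiLp.single_eq_of_ne, smul_eq_mul]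
    ring
  · have h0 : HasFDerivAt (fun y => vQfield d X ε Q y (Fin.last (d+1)))
        (0 : EuclideanSpace ℝ (Fin (d+2)) →L[ℝ] ℝ) x := by simpa using hasFDerivAt_const (0:ℝ) x
    simpa using gradM_apply_of_hasFDerivAt hv h0 j

end Derivative

section Estimates

variable {d : ℕ} {X : ℝ → EuclideanSpace ℝ (Fin (d+1))} {r : ℝ → ℝ}
  {Q : ℝ → Matrix (Fin (d+1)) (Fin (d+1)) ℝ}

theorem exists_sum_sq_vQfieldDerivLast_le {KX : ℝ≥0} (hX : LipschitzWith KX X)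
    (hr : Continuous r) (hQ : ∀ i j, ContDiff ℝ 1 fun z => Q z i j) :
    ∃ C, ∀ ε > 0, ∀ x ∈ channel (fun z => ball (X z) (r z)) ε,
      ∑ i, vQfieldDerivLast d X ε Q x i ^ 2 ≤ C * ε ^ 2 := by
  obtain ⟨CQ, hCQ⟩ := exists_abs_le_of_contDiff_Icc
    (f := fun (p : Fin (d+1) × Fin (d+1)) z => Q z p.1 p.2) (fun p => hQ p.1 p.2) 0 1
  obtain ⟨R, hR⟩ := (isCompact_Icc (a := (0:ℝ)) (b := 1)).bddAbove_image hr.continuousOn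
  have hX' : ∀ k t, |deriv (fun t => X t k) t| ≤ KX := fun k t => by
    simpa [Function.comp_def] using
      norm_deriv_le_of_lipschitz ((EuclideanSpace.lipschitzWith_apply k).comp hX)
  set B := ((d:ℝ) + 1) * CQ * (R + KX)
  refine ⟨(d + 1) * B ^ 2, fun ε hε x hx => ?_⟩
  set z := x (Fin.last (d+1))
  have hz : z ∈ Icc (0:ℝ) 1 := Ioo_subset_Icc_self ((mem_channel_ball_iff hε).1 hx).1
  have hCQ0 : 0 ≤ CQ := (abs_nonneg _).trans (hCQ (0, 0) z hz).1
  have hb : ∀ i, |vQfieldDerivLast d X ε Q x i| ≤ ε * B := fun i => by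
    calc |vQfieldDerivLast d X ε Q x i| ≤ ∑ _k : Fin (d+1), (CQ * (ε * R) + ε * CQ * KX) := by
          refine (Finset.abs_sum_le_sum_abs _ _).trans (Finset.sum_le_sum fun k _ => ?_)
          have hw := abs_sub_le_of_mem_channel_ball (fun z hz => hR (mem_image_of_mem r hz)) hε hx k
          calc _ ≤ |deriv (fun t => Q t i k) z * (x k.castSucc - ε * X z k)|
                + |ε * Q z i k * deriv (fun t => X t k) z| := abs_sub _ _
            _ = |deriv (fun t => Q t i k) z| * |x k.castSucc - ε * X z k|
                + ε * |Q z i k| * |deriv (fun t => X t k) z| := by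
                rw [abs_mul, abs_mul, abs_mul, abs_of_pos hε]
            _ ≤ _ := by gcongr; exacts [(hCQ (i, k) z hz).2, (hCQ (i, k) z hz).1, hX' k z]
      _ = ε * B := by simp only [Finset.sum_const, Finset.card_univ, Fintype.card_fin,
          nsmul_eq_mul, B]; push_cast; ring
  calc ∑ i, vQfieldDerivLast d X ε Q x i ^ 2 ≤ ∑ _i : Fin (d+1), (ε * B) ^ 2 :=
        Finset.sum_le_sum fun i _ => sq_le_sq' (abs_le.1 (hb i)).1 (abs_le.1 (hb i)).2
    _ = _ := by simp only [Finset.sum_const, Finset.card_univ, Fintype.card_fin, nsmul_eq_mul];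
                push_cast; ring

end Estimates

section Volume

variable {d : ℕ}

theorem ae_apply_last {p : ℝ → Prop} (hp : ∀ᵐ t, p t) :
    ∀ᵐ x : EuclideanSpace ℝ (Fin (d+2)), p (x (Fin.last (d+1))) := by
  simpa using measurePreserving_splitLast.quasiMeasurePreserving.ae
    (Measure.quasiMeasurePreserving_fst.ae hp)

theorem volume_splitLast_preimage_prod (A : Set ℝ) (B : Set (EuclideanSpace ℝ (Fin (d+1)))) :
    volume (splitLast ⁻¹' (A ×ˢ B)) = volume A * volume B := by
  rw [measurePreserving_splitLast.measure_preimage_equiv, Measure.prod_prod]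

theorem measureReal_splitLast_preimage_prod_ball (A : Set ℝ) (c : EuclideanSpace ℝ (Fin (d+1)))
    {ρ : ℝ} (hρ : 0 ≤ ρ) : volume.real (splitLast ⁻¹' (A ×ˢ ball c ρ)) =
      volume.real A * (ρ ^ (d+1) * volume.real (ball (0 : EuclideanSpace ℝ (Fin (d+1))) 1)) := by
  simp only [measureReal_def, volume_splitLast_preimage_prod, ENNReal.toReal_mul,
    Measure.addHaar_ball _ _ hρ, finrank_euclideanSpace_fin,
    ENNReal.toReal_ofReal (pow_nonneg hρ (d+1))]

end Volume

section Cylinders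

variable {d : ℕ} {X : ℝ → EuclideanSpace ℝ (Fin (d+1))} {r : ℝ → ℝ} {ε : ℝ}

theorem splitLast_preimage_subset_channel_ball {z₀ η ρ : ℝ} (hε : 0 < ε)
    (hnear : ∀ z, dist z z₀ < η → z ∈ Ioo 0 1 ∧ ρ + ‖X z - X z₀‖ < r z) :
    splitLast ⁻¹' (ball z₀ η ×ˢ ball (ε • X z₀) (ε * ρ)) ⊆
      channel (fun z => ball (X z) (r z)) ε := by
  intro x hx
  simp only [mem_preimage, splitLast_apply, mem_prod, mem_ball,
    dist_eq_norm (E := EuclideanSpace ℝ (Fin (d+1)))] at hx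
  set z := x (Fin.last (d+1))
  obtain ⟨hz, hρ⟩ := hnear z hx.1
  refine (mem_channel_ball_iff hε).2 ⟨hz, ?_⟩
  calc ‖horiz x - ε • X z‖ = ‖(horiz x - ε • X z₀) - ε • (X z - X z₀)‖ := by
        rw [smul_sub]; abel_nf
    _ ≤ ‖horiz x - ε • X z₀‖ + ‖ε • (X z - X z₀)‖ := norm_sub_le _ _
    _ = ‖horiz x - ε • X z₀‖ + ε * ‖X z - X z₀‖ := by rw [norm_smul, Real.norm_of_nonneg hε.le]
    _ < ε * (ρ + ‖X z - X z₀‖) := by linarith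
    _ < ε * r z := mul_lt_mul_of_pos_left hρ hε

theorem channel_ball_subset_splitLast_preimage {z₀ R : ℝ} (hε : 0 < ε)
    (hR : ∀ z ∈ Icc (0:ℝ) 1, r z + ‖X z - X z₀‖ ≤ R) :
    channel (fun z => ball (X z) (r z)) ε ⊆
      splitLast ⁻¹' (Ioo 0 1 ×ˢ ball (ε • X z₀) (ε * R)) := by
  intro x hx
  obtain ⟨hz, hw⟩ := (mem_channel_ball_iff hε).1 hx
  set z := x (Fin.last (d+1))
  simp only [mem_preimage, splitLast_apply, mem_prod, mem_ball,
    dist_eq_norm (E := EuclideanSpace ℝ (Fin (d+1)))]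
  refine ⟨hz, ?_⟩
  calc ‖horiz x - ε • X z₀‖ = ‖(horiz x - ε • X z) + ε • (X z - X z₀)‖ := by
        rw [smul_sub]; abel_nf
    _ ≤ ‖horiz x - ε • X z‖ + ‖ε • (X z - X z₀)‖ := norm_add_le _ _
    _ = ‖horiz x - ε • X z‖ + ε * ‖X z - X z₀‖ := by rw [norm_smul, Real.norm_of_nonneg hε.le]
    _ < ε * (r z + ‖X z - X z₀‖) := by linarith
    _ ≤ ε * R := mul_le_mul_of_nonneg_left (hR z (Ioo_subset_Icc_self hz)) hε.le

end Cylinders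

section Averages

variable {d : ℕ} {X : ℝ → EuclideanSpace ℝ (Fin (d+1))} {r : ℝ → ℝ}
  {Q : ℝ → Matrix (Fin (d+1)) (Fin (d+1)) ℝ} {KX : ℝ≥0}

theorem ae_frob2_gradM_vQfield (hX : LipschitzWith KX X)
    (hQ : ∀ i j, ContDiff ℝ 1 fun z => Q z i j) (hskew : ∀ z, (Q z)ᵀ = -(Q z)) (ε : ℝ) :
    ∀ᵐ x : EuclideanSpace ℝ (Fin (d+2)),
      frob2 (gradM (vQfield d X ε Q) x) =
        frob2 (Q (x (Fin.last (d+1)))) + ∑ i, vQfieldDerivLast d X ε Q x i ^ 2 ∧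
      frob2 (symPart (gradM (vQfield d X ε Q) x)) =
        2⁻¹ * ∑ i, vQfieldDerivLast d X ε Q x i ^ 2 := by
  filter_upwards [ae_apply_last hX.ae_differentiableAt] with x hx
  obtain ⟨hA, hb, hlast⟩ := gradM_vQfield (fun i j => (hQ i j).differentiable one_ne_zero _) hx
  exact ⟨frob2_eq_of_block hA hb hlast, frob2_symPart_eq_of_block (hskew _) hA hb hlast⟩

theorem exists_setAverage_frob2_symPart_gradM_vQfield_le (hX : LipschitzWith KX X)
    (hr : Continuous r) (hQ : ∀ i j, ContDiff ℝ 1 fun z => Q z i j)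
    (hskew : ∀ z, (Q z)ᵀ = -(Q z)) :
    ∃ C > 0, ∀ ε > 0, ⨍ x in channel (fun z => ball (X z) (r z)) ε,
      frob2 (symPart (gradM (vQfield d X ε Q) x)) ≤ C * ε ^ 2 := by
  obtain ⟨C, hC⟩ := exists_sum_sq_vQfieldDerivLast_le hX hr hQ
  refine ⟨|C| + 1, by positivity, fun ε hε => setAverage_le_of_ae_le (by positivity) ?_⟩
  filter_upwards [ae_restrict_mem (isOpen_channel_ball hX.continuous hr hε).measurableSet,
    ae_restrict_of_ae (ae_frob2_gradM_vQfield hX hQ hskew ε)] with x hxΩ hx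
  rw [hx.2]
  nlinarith [hC ε hε x hxΩ, mul_le_mul_of_nonneg_right (le_abs_self C) (sq_nonneg ε),
    mul_nonneg (abs_nonneg C) (sq_nonneg ε), sq_nonneg ε]

theorem integrableOn_frob2_gradM_vQfield (hX : LipschitzWith KX X) (hr : Continuous r)
    (hQ : ∀ i j, ContDiff ℝ 1 fun z => Q z i j) (hskew : ∀ z, (Q z)ᵀ = -(Q z)) {ε : ℝ}
    (hε : 0 < ε) (hΩ : volume (channel (fun z => ball (X z) (r z)) ε) ≠ ∞) :
    IntegrableOn (fun x => frob2 (gradM (vQfield d X ε Q) x))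
      (channel (fun z => ball (X z) (r z)) ε) := by
  obtain ⟨C, hC⟩ := exists_sum_sq_vQfieldDerivLast_le hX hr hQ
  obtain ⟨CF, hCF⟩ := (isCompact_Icc (a := (0:ℝ)) (b := 1)).bddAbove_image
    (Continuous.frob2 fun i j => (hQ i j).continuous).continuousOn
  have : IsFiniteMeasure (volume.restrict (channel (fun z => ball (X z) (r z)) ε)) :=
    isFiniteMeasure_restrict.2 hΩ
  refine Integrable.of_bound (Measurable.frob2 (measurable_gradM_apply _)).aestronglyMeasurable
    (CF + C * ε ^ 2) ?_
  filter_upwards [ae_restrict_mem (isOpen_channel_ball hX.continuous hr hε).measurableSet,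
    ae_restrict_of_ae (ae_frob2_gradM_vQfield hX hQ hskew ε)] with x hxΩ hx
  rw [Real.norm_of_nonneg (frob2_nonneg _), hx.1]
  exact add_le_add (hCF (mem_image_of_mem _ (Ioo_subset_Icc_self
    ((mem_channel_ball_iff hε).1 hxΩ).1))) (hC ε hε x hxΩ)

end Averages

section LowerBound

variable {d : ℕ} {X : ℝ → EuclideanSpace ℝ (Fin (d+1))} {r : ℝ → ℝ}
  {Q : ℝ → Matrix (Fin (d+1)) (Fin (d+1)) ℝ} {KX : ℝ≥0}

theorem exists_slab_lt_frob2 (hX : Continuous X) (hr : Continuous r)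
    (hrpos : ∀ z ∈ Icc (0:ℝ) 1, 0 < r z) (hQ : ∀ i j, Continuous fun z => Q z i j)
    (hQ0 : Q 0 = 0) (hQ1 : Q 1 = 0) (hQne : ∃ z ∈ Icc (0:ℝ) 1, Q z ≠ 0) :
    ∃ z₀ η m : ℝ, 0 < η ∧ 0 < m ∧ ∀ z, dist z z₀ < η →
      z ∈ Ioo 0 1 ∧ m < frob2 (Q z) ∧ r z₀ / 2 + ‖X z - X z₀‖ < r z := by
  obtain ⟨z₀, hz₀, hQz₀⟩ := hQne
  have hz₀' : z₀ ∈ Ioo (0:ℝ) 1 := ⟨hz₀.1.lt_of_ne (by rintro rfl; exact hQz₀ hQ0),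
    hz₀.2.lt_of_ne (by rintro rfl; exact hQz₀ hQ1)⟩
  have hF : Continuous fun z => frob2 (Q z) := Continuous.frob2 hQ
  have hslab : ∀ᶠ z in 𝓝 z₀, z ∈ Ioo (0:ℝ) 1 := Ioo_mem_nhds hz₀'.1 hz₀'.2
  have hQbig : ∀ᶠ z in 𝓝 z₀, frob2 (Q z₀) / 2 < frob2 (Q z) :=
    continuousAt_const.eventually_lt hF.continuousAt (half_lt_self (frob2_pos hQz₀))
  have hcross : ∀ᶠ z in 𝓝 z₀, r z₀ / 2 + ‖X z - X z₀‖ < r z :=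
    ContinuousAt.eventually_lt (f := fun z => r z₀ / 2 + ‖X z - X z₀‖)
      (continuous_const.add (hX.sub continuous_const).norm).continuousAt
      hr.continuousAt (by simpa using half_lt_self (hrpos z₀ hz₀))
  obtain ⟨η, hη, hnear⟩ := Metric.eventually_nhds_iff.1 (hslab.and (hQbig.and hcross))
  exact ⟨z₀, η, _, hη, half_pos (frob2_pos hQz₀), fun z hz => hnear hz⟩

theorem exists_le_setAverage_frob2_gradM_vQfield (hX : LipschitzWith KX X) (hr : Continuous r)
    (hrpos : ∀ z ∈ Icc (0:ℝ) 1, 0 < r z) (hQ : memI d Q)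
    (hQne : ∃ z ∈ Icc (0:ℝ) 1, Q z ≠ 0) :
    ∃ c > 0, ∀ ε > 0, c ≤ ⨍ x in channel (fun z => ball (X z) (r z)) ε,
      frob2 (gradM (vQfield d X ε Q) x) := by
  obtain ⟨hQc, hskew, hQ0, hQ1⟩ := hQ
  obtain ⟨z₀, η, m, hη, hm, hnear⟩ := exists_slab_lt_frob2 hX.continuous hr hrpos
    (fun i j => (hQc i j).continuous) hQ0 hQ1 hQne
  obtain ⟨hz₀, -, hr₀⟩ := hnear z₀ (by simpa using hη)
  rw [sub_self, norm_zero, add_zero, half_lt_self_iff] at hr₀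
  obtain ⟨R, hR⟩ := (isCompact_Icc (a := (0:ℝ)) (b := 1)).bddAbove_image
    (hr.add (hX.continuous.sub continuous_const).norm).continuousOn
  have hR' : ∀ z ∈ Icc (0:ℝ) 1, r z + ‖X z - X z₀‖ ≤ R := fun z hz =>
    hR (mem_image_of_mem _ hz)
  have hR0 : 0 < R := hr₀.trans_le (by simpa using hR' z₀ (Ioo_subset_Icc_self hz₀))
  have hV : 0 < volume.real (ball (0 : EuclideanSpace ℝ (Fin (d+1))) 1) :=
    ENNReal.toReal_pos (measure_ball_pos _ _ one_pos).ne' measure_ball_lt_top.ne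
  refine ⟨m * (2 * η) * (r z₀ / 2 / R) ^ (d+1), by positivity, fun ε hε => ?_⟩
  set P := splitLast ⁻¹' (ball z₀ η ×ˢ ball (ε • X z₀) (ε * (r z₀ / 2)))
  set P' := splitLast ⁻¹' (Ioo 0 1 ×ˢ ball (ε • X z₀) (ε * R))
  have hPΩ := splitLast_preimage_subset_channel_ball (r := r) hε fun z hz =>
    ⟨(hnear z hz).1, (hnear z hz).2.2⟩
  have hΩP' := channel_ball_subset_splitLast_preimage (X := X) hε hR'
  have hP' : volume P' ≠ ∞ := by
    rw [volume_splitLast_preimage_prod]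
    exact ENNReal.mul_ne_top (by simp) measure_ball_lt_top.ne
  have hmP : ∀ᵐ x ∂volume.restrict P, m ≤ frob2 (gradM (vQfield d X ε Q) x) := by
    filter_upwards [ae_restrict_mem
        (splitLast.measurable (measurableSet_ball.prod measurableSet_ball)),
      ae_restrict_of_ae (ae_frob2_gradM_vQfield hX hQc hskew ε)] with x hxP hx
    rw [hx.1]
    linarith [(hnear _ (by simpa [P] using hxP.1)).2.1,
      Finset.sum_nonneg fun i (_ : i ∈ Finset.univ) => sq_nonneg (vQfieldDerivLast d X ε Q x i)]
  convert mul_measureReal_div_le_setAverage hm.le hPΩ hΩP' hP'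
    (integrableOn_frob2_gradM_vQfield hX hr hQc hskew hε
      (ne_top_of_le_ne_top hP' (measure_mono hΩP')))
    (Eventually.of_forall fun x => frob2_nonneg _) hmP using 1
  rw [measureReal_splitLast_preimage_prod_ball _ _ (by positivity),
    measureReal_splitLast_preimage_prod_ball _ _ (by positivity), Real.volume_real_ball hη.le,
    Real.volume_real_Ioo_of_le zero_le_one, div_pow, mul_pow, mul_pow]
  field_simp
  ring

end LowerBound

/-- for circular cross sections, the rotational fields
`v^ε(x_h,z) = (Q(z)(x_h − εX(z)), 0)` built from a nonzero skew-symmetric path `Q`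
vanishing at the endpoints belong to `W^{1,2}`, satisfy the boundary conditions, and
exhibit the `ε²` degeneration of the Korn constant. -/
theorem rotational_fields_degenerate_korn (d : ℕ)
    (X : ℝ → EuclideanSpace ℝ (Fin (d+1))) (r : ℝ → ℝ)
    (hX : ∃ K : ℝ≥0, LipschitzWith K X) (hr : ∃ K : ℝ≥0, LipschitzWith K r)
    (hrpos : ∀ z ∈ Set.Icc (0:ℝ) 1, 0 < r z)
    (Q : ℝ → Matrix (Fin (d+1)) (Fin (d+1)) ℝ) (hQ : memI d Q)
    (hQne : ∃ z ∈ Set.Icc (0:ℝ) 1, Q z ≠ 0) :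
    ∃ c C : ℝ, 0 < c ∧ 0 < C ∧ ∀ ε : ℝ, ε ∈ Set.Ioc (0:ℝ) 1 →
      (∃ K : ℝ≥0, LipschitzOnWith K (vQfield d X ε Q)
          (channel (fun z => Metric.ball (X z) (r z)) ε)) ∧
      normalBC (channel (fun z => Metric.ball (X z) (r z)) ε) (vQfield d X ε Q) ∧
      endsZero (channel (fun z => Metric.ball (X z) (r z)) ε) (vQfield d X ε Q) ∧
      c ≤ ⨍ x in channel (fun z => Metric.ball (X z) (r z)) ε,
            frob2 (gradM (vQfield d X ε Q) x) ∧
      ⨍ x in channel (fun z => Metric.ball (X z) (r z)) ε,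
          frob2 (symPart (gradM (vQfield d X ε Q) x)) ≤ C * ε ^ 2 := by
  obtain ⟨KX, hX⟩ := hX
  obtain ⟨Kr, hr⟩ := hr
  obtain ⟨c, hc, hlower⟩ :=
    exists_le_setAverage_frob2_gradM_vQfield hX hr.continuous hrpos hQ hQne
  obtain ⟨hQc, hskew, hQ0, hQ1⟩ := hQ
  obtain ⟨C, hC, hupper⟩ :=
    exists_setAverage_frob2_symPart_gradM_vQfield_le hX hr.continuous hQc hskew
  refine ⟨c, C, hc, hC, fun ε hε => ⟨?_, ?_, endsZero_vQfield hQ0 hQ1 _, hlower ε hε.1,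
    hupper ε hε.1⟩⟩
  · exact exists_lipschitzOnWith_vQfield hX hr.continuous hQc hε.1
  · exact normalBC_vQfield hX.continuous hr.continuous hrpos hε.1 hskew hQ0 hQ1
end
end
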